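/- arXiv:1912.11496 — 9 statements merged into one kernel-verified Lean document; each statement's English description precedes it below -/
import Mathlib

section
/- Let q be a prime power, r ≥ 2 an integer dividing q−1 with q ≥ r^4, and let G be the unique subgroup of F_q^× of index r. Then for all nonzero a, b ∈ F_q, every nonzero coset of G meets the set aG + bG = { a' + b' : a' ∈ aG, b' ∈ bG }. Equivalently, F_q^× ⊆ aG + bG. -/
open Finset

set_option maxHeartbeats 1600000

section aux

variable {F : Type*} [Field F] [Fintype F]

private lemma mulChar_norm_le_one (χ : MulChar F ℂ) (t : F) : ‖χ t‖ ≤ 1 := by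
  letI : Fintype Fˣ := Fintype.ofFinite _
  rcases eq_or_ne t 0 with rfl | ht
  · rw [MulChar.map_zero]; simp
  · have h : χ t ^ Fintype.card Fˣ = 1 := by
      rw [← MulChar.pow_apply' χ Fintype.card_pos.ne', MulChar.pow_card_eq_one,
        MulChar.one_apply (isUnit_iff_ne_zero.mpr ht)]
    rw [Complex.norm_eq_one_of_pow_eq_one h Fintype.card_pos.ne']

private lemma jacobi_norm_le (χ ψ : MulChar F ℂ) (h : ¬(χ = 1 ∧ ψ = 1)) :
    ‖jacobiSum χ ψ‖ ≤ Real.sqrt (Fintype.card F) := by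
  have h1 : (1 : ℝ) ≤ Real.sqrt (Fintype.card F) := by
    rw [show (1:ℝ) = Real.sqrt 1 by simp]
    exact Real.sqrt_le_sqrt (by exact_mod_cast Fintype.one_lt_card.le)
  rcases eq_or_ne χ 1 with rfl | hχ
  · rcases eq_or_ne ψ 1 with rfl | hψ
    · exact absurd ⟨rfl, rfl⟩ h
    · rw [jacobiSum_one_nontrivial hψ]; simpa using h1
  rcases eq_or_ne ψ 1 with rfl | hψ
  · rw [jacobiSum_comm, jacobiSum_one_nontrivial hχ]; simpa using h1
  rcases eq_or_ne (χ * ψ) 1 with hχψ | hχψ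
  · have hψ' : ψ = χ⁻¹ := eq_inv_of_mul_eq_one_left (by rwa [mul_comm])
    subst hψ'
    rw [jacobiSum_nontrivial_inv hχ, norm_neg]
    exact (mulChar_norm_le_one χ (-1)).trans h1
  · have hchar : ringChar ℂ ≠ ringChar F := by
      rw [ringChar.eq_zero]
      exact (CharP.char_ne_zero_of_finite F (ringChar F)).symm
    have key := jacobiSum_mul_jacobiSum_inv hchar hχ hψ hχψ
    have hconj : jacobiSum χ⁻¹ ψ⁻¹ = starRingEnd ℂ (jacobiSum χ ψ) := by
      simp only [jacobiSum, map_sum, map_mul]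
      refine Finset.sum_congr rfl fun x _ => ?_
      rw [starRingEnd_apply, starRingEnd_apply, MulChar.star_apply', MulChar.star_apply']
    rw [hconj] at key
    have hsq : ‖jacobiSum χ ψ‖ ^ 2 = (Fintype.card F : ℝ) := by
      have := congrArg norm key
      rwa [norm_mul, Complex.norm_conj, ← sq,
        Complex.norm_natCast] at this
    rw [← Real.sqrt_sq (norm_nonneg _), hsq]

end aux

/-- For a finite field `F` with `q` elements, `r ≥ 2` dividing `q - 1`,
`q ≥ r^4`, and `G` the subgroup of `r`-th powers (the unique subgroup of
index `r`), for all nonzero `a b` we have `F^× ⊆ aG + bG`: every nonzero `u`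
is of the form `a x^r + b y^r` with `x, y` nonzero. -/
theorem stmt_2 (F : Type*) [Field F] [Fintype F] (r : ℕ) (hr : 2 ≤ r)
    (hdvd : r ∣ Fintype.card F - 1) (hq : r ^ 4 ≤ Fintype.card F)
    (a b : F) (ha : a ≠ 0) (hb : b ≠ 0) :
    ∀ u : F, u ≠ 0 → ∃ x y : F, x ≠ 0 ∧ y ≠ 0 ∧ a * x ^ r + b * y ^ r = u := by
  classical
  intro u hu
  have hr0 : r ≠ 0 := by omega
  -- a multiplicative character of order exactly `r`
  obtain ⟨χ, hχord⟩ := MulChar.exists_mulChar_orderOf F hdvd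
    (Complex.isPrimitiveRoot_exp r hr0)
  have hχr : χ ^ r = 1 := by rw [← hχord]; exact pow_orderOf_eq_one χ
  have hχne : ∀ j, 0 < j → j < r → χ ^ j ≠ 1 := by
    intro j hj hjr h
    have := orderOf_le_of_pow_eq_one hj h
    omega
  -- `χ t = 1` iff `t` is a nonzero `r`-th power
  have hGiff : ∀ t : F, t ≠ 0 → ((∃ α : F, α ^ r = t) ↔ χ t = 1) := by
    obtain ⟨g, hg⟩ := IsCyclic.exists_generator (α := Fˣ)
    have hgord : orderOf (χ (g : F)) = r := by
      have hd1 : orderOf (χ (g : F)) ∣ r := orderOf_dvd_of_pow_eq_one (by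
        rw [← MulChar.pow_apply_coe, hχr, MulChar.one_apply_coe])
      have hd2 : r ∣ orderOf (χ (g : F)) := by
        rw [← hχord]
        apply orderOf_dvd_of_pow_eq_one
        apply MulChar.ext
        intro x
        obtain ⟨i, hi⟩ : ∃ i : ℕ, g ^ i = x := by
          have := hg x
          rwa [← mem_powers_iff_mem_zpowers, Submonoid.mem_powers_iff] at this
        rw [← hi, MulChar.pow_apply_coe, MulChar.one_apply_coe,
          Units.val_pow_eq_pow_val, map_pow, ← pow_mul, mul_comm, pow_mul,
          pow_orderOf_eq_one, one_pow]
      exact Nat.dvd_antisymm hd1 hd2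
    intro t ht
    constructor
    · rintro ⟨α, rfl⟩
      have hα : α ≠ 0 := fun h => ht (by rw [h, zero_pow hr0])
      rw [map_pow, ← MulChar.pow_apply' χ hr0, hχr,
        MulChar.one_apply (isUnit_iff_ne_zero.mpr hα)]
    · intro hχt
      obtain ⟨i, hi⟩ : ∃ i : ℕ, g ^ i = Units.mk0 t ht := by
        have := hg (Units.mk0 t ht)
        rwa [← mem_powers_iff_mem_zpowers, Submonoid.mem_powers_iff] at this
      have hgi : ((g : F)) ^ i = t := by
        rw [← Units.val_pow_eq_pow_val, hi, Units.val_mk0]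
      have h1 : χ (g : F) ^ i = 1 := by rw [← map_pow, hgi, hχt]
      have h2 : r ∣ i := hgord ▸ orderOf_dvd_of_pow_eq_one h1
      obtain ⟨c, rfl⟩ := h2
      exact ⟨(g : F) ^ c, by rw [← pow_mul, mul_comm, hgi]⟩
  -- the indicator sum
  set S1 : F → ℂ := fun t => ∑ j ∈ range r, (χ ^ j) t with hS1
  have hB : ∀ t : F, S1 t = if (∃ α : F, α ^ r = t) ∧ t ≠ 0 then (r : ℂ) else 0 := by
    intro t
    rcases eq_or_ne t 0 with rfl | ht
    · rw [if_neg (by tauto)]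
      simp only [hS1]
      exact Finset.sum_eq_zero fun j _ => MulChar.map_zero _
    · have ht' : ∀ j : ℕ, (χ ^ j) t = χ t ^ j := fun j => by
        rw [show t = ((Units.mk0 t ht : Fˣ) : F) from rfl, MulChar.pow_apply_coe]
      have hz : χ t ^ r = 1 := by
        rw [← ht', hχr, MulChar.one_apply (isUnit_iff_ne_zero.mpr ht)]
      rcases eq_or_ne (χ t) 1 with h1 | h1
      · rw [if_pos ⟨(hGiff t ht).mpr h1, ht⟩]
        simp only [hS1, ht', h1, one_pow, Finset.sum_const, card_range, nsmul_eq_mul, mul_one]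
      · rw [if_neg (fun hc => h1 ((hGiff t ht).mp hc.1))]
        simp only [hS1, ht']
        rw [geom_sum_eq h1, hz, sub_self, zero_div]
  -- the set of good intermediate values
  set M : Finset F := univ.filter (fun s =>
      ((∃ α : F, α ^ r = s * a⁻¹) ∧ s * a⁻¹ ≠ 0) ∧
      ((∃ β : F, β ^ r = (u - s) * b⁻¹) ∧ (u - s) * b⁻¹ ≠ 0)) with hM
  -- first evaluation of the sum
  have hsum1 : ∑ s : F, S1 (s * a⁻¹) * S1 ((u - s) * b⁻¹) = (M.card : ℂ) * (r : ℂ) ^ 2 := by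
    have h1 : ∀ s : F, S1 (s * a⁻¹) * S1 ((u - s) * b⁻¹) =
        if (((∃ α : F, α ^ r = s * a⁻¹) ∧ s * a⁻¹ ≠ 0) ∧
           ((∃ β : F, β ^ r = (u - s) * b⁻¹) ∧ (u - s) * b⁻¹ ≠ 0)) then (r : ℂ) ^ 2 else 0 := by
      intro s
      rw [hB, hB]
      split_ifs with h1 h2 h3 h4 <;> first | (exfalso; tauto) | ring
    rw [Finset.sum_congr rfl fun s _ => h1 s, Finset.sum_ite, Finset.sum_const,
      Finset.sum_const, smul_zero, add_zero, nsmul_eq_mul, hM]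
  -- the Jacobi sum expansion
  have claim3 : ∀ φ ψ : MulChar F ℂ,
      ∑ s : F, φ s * ψ (u - s) = φ u * ψ u * jacobiSum φ ψ := by
    intro φ ψ
    rw [jacobiSum, Finset.mul_sum, ← Equiv.sum_comp (Equiv.mulLeft₀ u hu)
      (fun s => φ s * ψ (u - s))]
    refine Finset.sum_congr rfl fun x _ => ?_
    have hcoe : (Equiv.mulLeft₀ u hu) x = u * x := rfl
    rw [hcoe, show u - u * x = u * (1 - x) by ring, map_mul, map_mul]
    ring
  have hsum2 : ∑ s : F, S1 (s * a⁻¹) * S1 ((u - s) * b⁻¹) =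
      ∑ j ∈ range r, ∑ k ∈ range r,
        (χ ^ j) a⁻¹ * (χ ^ k) b⁻¹ *
          ((χ ^ j) u * (χ ^ k) u * jacobiSum (χ ^ j) (χ ^ k)) := by
    calc ∑ s : F, S1 (s * a⁻¹) * S1 ((u - s) * b⁻¹)
        = ∑ s : F, ∑ j ∈ range r, ∑ k ∈ range r,
            ((χ ^ j) a⁻¹ * (χ ^ k) b⁻¹) * ((χ ^ j) s * (χ ^ k) (u - s)) := by
          refine Finset.sum_congr rfl fun s _ => ?_
          rw [hS1]
          simp only [map_mul]
          rw [Finset.sum_mul_sum]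
          exact Finset.sum_congr rfl fun j _ => Finset.sum_congr rfl fun k _ => by ring
      _ = ∑ j ∈ range r, ∑ k ∈ range r,
            ((χ ^ j) a⁻¹ * (χ ^ k) b⁻¹) * ∑ s : F, (χ ^ j) s * (χ ^ k) (u - s) := by
          rw [Finset.sum_comm]
          refine Finset.sum_congr rfl fun j _ => ?_
          rw [Finset.sum_comm]
          refine Finset.sum_congr rfl fun k _ => ?_
          rw [Finset.mul_sum]
      _ = _ := by
          refine Finset.sum_congr rfl fun j _ => Finset.sum_congr rfl fun k _ => ?_
          rw [claim3]
  -- combine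
  have key : (M.card : ℂ) * (r : ℂ) ^ 2 =
      ∑ p ∈ range r ×ˢ range r,
        (χ ^ p.1) a⁻¹ * (χ ^ p.2) b⁻¹ *
          ((χ ^ p.1) u * (χ ^ p.2) u * jacobiSum (χ ^ p.1) (χ ^ p.2)) := by
    rw [← hsum1, hsum2, Finset.sum_product]
  have hmem : ((0, 0) : ℕ × ℕ) ∈ range r ×ˢ range r := by
    simp [Finset.mem_product]; omega
  have T00 : (χ ^ (0:ℕ)) a⁻¹ * (χ ^ (0:ℕ)) b⁻¹ *
      ((χ ^ (0:ℕ)) u * (χ ^ (0:ℕ)) u * jacobiSum (χ ^ (0:ℕ)) (χ ^ (0:ℕ))) =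
      (Fintype.card F : ℂ) - 2 := by
    rw [pow_zero, jacobiSum_one_one,
      MulChar.one_apply (isUnit_iff_ne_zero.mpr (inv_ne_zero ha)),
      MulChar.one_apply (isUnit_iff_ne_zero.mpr (inv_ne_zero hb)),
      MulChar.one_apply (isUnit_iff_ne_zero.mpr hu)]
    ring
  have key2 : (M.card : ℂ) * (r : ℂ) ^ 2 - ((Fintype.card F : ℂ) - 2) =
      ∑ p ∈ (range r ×ˢ range r).erase (0, 0),
        (χ ^ p.1) a⁻¹ * (χ ^ p.2) b⁻¹ *
          ((χ ^ p.1) u * (χ ^ p.2) u * jacobiSum (χ ^ p.1) (χ ^ p.2)) := by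
    rw [key, ← Finset.add_sum_erase _ _ hmem, T00]
    ring
  -- bound each term
  have hterm : ∀ p ∈ (range r ×ˢ range r).erase (0, 0),
      ‖(χ ^ p.1) a⁻¹ * (χ ^ p.2) b⁻¹ *
        ((χ ^ p.1) u * (χ ^ p.2) u * jacobiSum (χ ^ p.1) (χ ^ p.2))‖ ≤
        Real.sqrt (Fintype.card F) := by
    rintro ⟨j, k⟩ hp
    rw [Finset.mem_erase, Finset.mem_product, Finset.mem_range, Finset.mem_range] at hp
    obtain ⟨hne, hj, hk⟩ := hp
    have hnotboth : ¬(χ ^ j = 1 ∧ χ ^ k = 1) := by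
      rintro ⟨h1, h2⟩
      rcases Nat.eq_zero_or_pos j with rfl | hj0
      · rcases Nat.eq_zero_or_pos k with rfl | hk0
        · exact hne rfl
        · exact hχne k hk0 hk h2
      · exact hχne j hj0 hj h1
    have hJ := jacobi_norm_le (χ ^ j) (χ ^ k) hnotboth
    have h1 := mulChar_norm_le_one (χ ^ j) a⁻¹
    have h2 := mulChar_norm_le_one (χ ^ k) b⁻¹
    have h3 := mulChar_norm_le_one (χ ^ j) u
    have h4 := mulChar_norm_le_one (χ ^ k) u
    have hs0 : (0:ℝ) ≤ Real.sqrt (Fintype.card F) := Real.sqrt_nonneg _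
    calc ‖(χ ^ j) a⁻¹ * (χ ^ k) b⁻¹ * ((χ ^ j) u * (χ ^ k) u * jacobiSum (χ ^ j) (χ ^ k))‖
        = ‖(χ ^ j) a⁻¹‖ * ‖(χ ^ k) b⁻¹‖ * (‖(χ ^ j) u‖ * ‖(χ ^ k) u‖ *
            ‖jacobiSum (χ ^ j) (χ ^ k)‖) := by
          simp [norm_mul]
      _ ≤ 1 * 1 * (1 * 1 * Real.sqrt (Fintype.card F)) := by
          gcongr
      _ = Real.sqrt (Fintype.card F) := by ring
  -- the norm bound
  have hbnd : ‖(M.card : ℂ) * (r : ℂ) ^ 2 - ((Fintype.card F : ℂ) - 2)‖ ≤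
      ((r : ℝ) ^ 2 - 1) * Real.sqrt (Fintype.card F) := by
    rw [key2]
    refine (norm_sum_le _ _).trans ?_
    have := Finset.sum_le_card_nsmul _ _ _ hterm
    rw [Finset.card_erase_of_mem hmem, Finset.card_product, Finset.card_range] at this
    refine this.trans ?_
    rw [nsmul_eq_mul]
    gcongr ?_ * _
    have : (1:ℕ) ≤ r * r := Nat.one_le_iff_ne_zero.mpr (by positivity)
    push_cast [Nat.cast_sub this]
    ring_nf
    nlinarith [Real.sqrt_nonneg (Fintype.card F : ℝ)]
  -- turn into a real inequality
  have hreal : |((M.card : ℝ) * (r : ℝ) ^ 2 - ((Fintype.card F : ℝ) - 2))| ≤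
      ((r : ℝ) ^ 2 - 1) * Real.sqrt (Fintype.card F) := by
    have : ((M.card : ℂ) * (r : ℂ) ^ 2 - ((Fintype.card F : ℂ) - 2)) =
        (((M.card : ℝ) * (r : ℝ) ^ 2 - ((Fintype.card F : ℝ) - 2) : ℝ) : ℂ) := by
      push_cast; ring
    rwa [this, Complex.norm_real, Real.norm_eq_abs] at hbnd
  -- positivity
  have hs2 : ((r : ℝ)) ^ 2 ≤ Real.sqrt (Fintype.card F) := by
    have h4 : ((r : ℝ)) ^ 4 ≤ (Fintype.card F : ℝ) := by exact_mod_cast hq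
    have : ((r : ℝ)) ^ 2 = Real.sqrt (((r : ℝ) ^ 2) ^ 2) := by
      rw [Real.sqrt_sq (by positivity)]
    rw [this]
    apply Real.sqrt_le_sqrt
    nlinarith
  have hssq : Real.sqrt (Fintype.card F) ^ 2 = (Fintype.card F : ℝ) :=
    Real.sq_sqrt (by positivity)
  have hr2 : (2:ℝ) ≤ (r:ℝ) := by exact_mod_cast hr
  have hMpos : 0 < M.card := by
    by_contra h
    have hM0 : M.card = 0 := by omega
    rw [hM0] at hreal
    simp only [Nat.cast_zero, zero_mul, zero_sub, abs_neg] at hreal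
    have habs : (Fintype.card F : ℝ) - 2 ≤ ((r : ℝ) ^ 2 - 1) * Real.sqrt (Fintype.card F) := by
      calc (Fintype.card F : ℝ) - 2 ≤ |(Fintype.card F : ℝ) - 2| := le_abs_self _
        _ ≤ _ := hreal
    nlinarith [Real.sqrt_nonneg (Fintype.card F : ℝ)]
  -- extract the witness
  obtain ⟨s, hs⟩ := Finset.card_pos.mp hMpos
  rw [hM, Finset.mem_filter] at hs
  obtain ⟨-, ⟨⟨α, hα⟩, hsa⟩, ⟨β, hβ⟩, hsb⟩ := hs
  refine ⟨α, β, ?_, ?_, ?_⟩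
  · intro h; rw [h, zero_pow hr0] at hα; exact hsa hα.symm
  · intro h; rw [h, zero_pow hr0] at hβ; exact hsb hβ.symm
  · rw [hα, hβ]
    field_simp
    ring
end

section
/- Let F be an infinite field and G a subgroup of F^× of finite index. Then G − G = F, i.e., every element of F can be written as x − y with x, y ∈ G. -/
open Finset

/-- Generic choice: all nonempty subset sums of `t` are nonzero. -/
lemma gen_t {F : Type*} [Field F] [Infinite F] {ι : Type} [Fintype ι] :
    ∃ t : ι → F, ∀ S : Finset ι, S.Nonempty → ∑ i ∈ S, t i ≠ 0 := by
  classical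
  suffices h : ∀ s : Finset ι, ∃ t : ι → F, ∀ S ⊆ s, S.Nonempty → ∑ i ∈ S, t i ≠ 0 by
    obtain ⟨t, ht⟩ := h univ
    exact ⟨t, fun S hS => ht S (subset_univ S) hS⟩
  intro s
  induction s using Finset.cons_induction with
  | empty =>
    exact ⟨fun _ => 1, fun S hS hne => absurd (subset_empty.mp hS) hne.ne_empty⟩
  | cons a s ha ih =>
    obtain ⟨t, ht⟩ := ih
    obtain ⟨x, hx⟩ := Infinite.exists_notMem_finset
      (s.powerset.image (fun S => -∑ i ∈ S, t i))
    refine ⟨Function.update t a x, ?_⟩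
    intro S hS hne
    by_cases haS : a ∈ S
    · rw [← Finset.add_sum_erase _ _ haS]
      have h1 : ∀ i ∈ S.erase a, Function.update t a x i = t i := fun i hi =>
        Function.update_of_ne (Finset.ne_of_mem_erase hi) _ _
      rw [Finset.sum_congr rfl h1, Function.update_self]
      intro h0
      apply hx
      refine Finset.mem_image.mpr ⟨S.erase a, ?_, ?_⟩
      · refine Finset.mem_powerset.mpr (fun i hi => ?_)
        rcases Finset.mem_cons.mp (hS (Finset.mem_of_mem_erase hi)) with h | h
        · exact absurd h (Finset.ne_of_mem_erase hi)
        · exact h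
      · exact (eq_neg_of_add_eq_zero_left h0).symm
    · have hSs : S ⊆ s := fun i hi => by
        rcases Finset.mem_cons.mp (hS hi) with h | h
        · rw [h] at hi; exact absurd hi haS
        · exact h
      have he : ∑ i ∈ S, Function.update t a x i = ∑ i ∈ S, t i :=
        Finset.sum_congr rfl fun i hi =>
          Function.update_of_ne (by rintro rfl; exact haS hi) _ _
      rw [he]; exact ht S hSs hne

/-- (Bergelson–Shapiro, Turnwald) If `F` is an infinite field and `G` is a
subgroup of `F^×` of finite index, then `G - G = F`. -/
theorem stmt_5 (F : Type*) [Field F] [Infinite F] (G : Subgroup Fˣ)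
    (hG : G.index ≠ 0) :
    ∀ z : F, ∃ x y : Fˣ, x ∈ G ∧ y ∈ G ∧ (x : F) - (y : F) = z := by
  classical
  intro z
  haveI hQfin : Finite (Fˣ ⧸ G) := Nat.finite_of_card_ne_zero hG
  by_cases hz : z = 0
  · exact ⟨1, 1, G.one_mem, G.one_mem, by simp [hz]⟩
  haveI : Finite (Option (Fˣ ⧸ G)) :=
    Finite.of_equiv ((Fˣ ⧸ G) ⊕ PUnit.{1}) (Equiv.optionEquivSumPUnit (Fˣ ⧸ G)).symm
  obtain ⟨ι, hι, hHJ⟩ := Combinatorics.Line.exists_mono_in_high_dimension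
    (Option (Fˣ ⧸ G)) (Option (Fˣ ⧸ G))
  obtain ⟨t, ht⟩ := gen_t (F := F) (ι := ι)
  -- letters: `none ↦ 0`, `some q ↦ c_q * z` where `c_q` is a coset representative
  set v : Option (Fˣ ⧸ G) → F := fun a =>
    match a with
    | none => 0
    | some q => ((Quotient.out q : Fˣ) : F) * z with hv
  set y : (ι → Option (Fˣ ⧸ G)) → F := fun w => 1 + ∑ i, v (w i) * t i with hy
  set κ : (ι → Option (Fˣ ⧸ G)) → Option (Fˣ ⧸ G) := fun w =>
    if h : y w = 0 then none
    else some (QuotientGroup.mk (Units.mk0 (y w) h)) with hκ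
  obtain ⟨l, cstar, hc⟩ := hHJ κ
  -- the moving coordinates
  set Sm : Finset ι := univ.filter (fun i => l.idxFun i = none) with hSm
  have hSm_ne : Sm.Nonempty := by
    obtain ⟨i, hi⟩ := l.proper
    exact ⟨i, by simp [hSm, hi]⟩
  set T : F := ∑ i ∈ Sm, t i with hT
  have hT0 : T ≠ 0 := ht Sm hSm_ne
  set f : F := ∑ i ∈ univ.filter (fun i => ¬ l.idxFun i = none),
      v ((l.idxFun i).getD none) * t i with hf
  have hline : ∀ a, y (l a) = (1 + f) + v a * T := by
    intro a
    show 1 + ∑ i, v ((l.idxFun i).getD a) * t i = _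
    rw [← Finset.sum_filter_add_sum_filter_not univ (fun i => l.idxFun i = none)]
    have h1 : ∑ i ∈ univ.filter (fun i => l.idxFun i = none),
        v ((l.idxFun i).getD a) * t i = v a * T := by
      rw [hT, Finset.mul_sum]
      refine Finset.sum_congr rfl fun i hi => ?_
      have hnone : l.idxFun i = none := by
        simpa using (Finset.mem_filter.mp hi).2
      rw [hnone]
      rfl
    have h2 : ∑ i ∈ univ.filter (fun i => ¬ l.idxFun i = none),
        v ((l.idxFun i).getD a) * t i = f := by
      refine Finset.sum_congr rfl fun i hi => ?_
      have hne : l.idxFun i ≠ none := by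
        simpa using (Finset.mem_filter.mp hi).2
      rcases Option.ne_none_iff_exists'.mp hne with ⟨b, hb⟩
      rw [hb]
      rfl
    rw [h1, h2]; ring
  have hv_none : v none = 0 := rfl
  -- the color is not `none`
  obtain ⟨e, he⟩ : ∃ e, cstar = some e := by
    rcases hcs : cstar with _ | e
    · exfalso
      have e1 := hc none
      have e2 := hc (some (QuotientGroup.mk (1 : Fˣ)))
      rw [hcs, hκ] at e1 e2
      simp only at e1 e2
      by_cases h1 : y (l none) = 0
      · by_cases h2 : y (l (some (QuotientGroup.mk (1 : Fˣ)))) = 0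
        · rw [hline] at h1 h2
          have h3 : v (some (QuotientGroup.mk (1 : Fˣ))) * T = 0 := by
            rw [hv_none] at h1
            linear_combination h2 - h1
          rcases mul_eq_zero.mp h3 with h | h
          · rcases mul_eq_zero.mp h with h' | h'
            · exact Units.ne_zero _ h'
            · exact hz h'
          · exact hT0 h
        · rw [dif_neg h2] at e2; exact Option.some_ne_none _ e2
      · rw [dif_neg h1] at e1; exact Option.some_ne_none _ e1
    · exact ⟨e, rfl⟩
  have hcol : ∀ a, ∃ h : y (l a) ≠ 0,
      (QuotientGroup.mk (Units.mk0 (y (l a)) h) : Fˣ ⧸ G) = e := by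
    intro a
    have e1 := hc a
    rw [hκ, he] at e1
    simp only at e1
    by_cases h1 : y (l a) = 0
    · rw [dif_pos h1] at e1; exact absurd e1 (by simp)
    · rw [dif_neg h1] at e1
      exact ⟨h1, Option.some_injective _ e1⟩
  -- extract data
  obtain ⟨h₀, hU₀⟩ := hcol none
  set U₀ : Fˣ := Units.mk0 (y (l none)) h₀ with hU₀def
  set Tu : Fˣ := Units.mk0 T hT0 with hTudef
  set q₀ : Fˣ ⧸ G := QuotientGroup.mk (U₀ * Tu⁻¹) with hq₀
  obtain ⟨h₂, hX₂⟩ := hcol (some q₀)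
  set X₂ : Fˣ := Units.mk0 (y (l (some q₀))) h₂ with hX₂def
  set c : Fˣ := Quotient.out q₀ with hcdef
  -- memberships
  have hmk : (QuotientGroup.mk c : Fˣ ⧸ G) = QuotientGroup.mk (U₀ * Tu⁻¹) :=
    QuotientGroup.out_eq' q₀
  have hg₀ : (c * Tu)⁻¹ * U₀ ∈ G := by
    have h := QuotientGroup.eq.mp hmk
    have heq : (c * Tu)⁻¹ * U₀ = c⁻¹ * (U₀ * Tu⁻¹) := by
      rw [mul_inv_rev]
      rw [mul_comm Tu⁻¹ c⁻¹, mul_assoc, mul_comm Tu⁻¹ U₀]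
    rw [heq]; exact h
  have hg₂ : (c * Tu)⁻¹ * X₂ ∈ G := by
    have hU₀X₂ : U₀⁻¹ * X₂ ∈ G := by
      apply QuotientGroup.eq.mp
      rw [hU₀, hX₂]
    have heq : (c * Tu)⁻¹ * X₂ = ((c * Tu)⁻¹ * U₀) * (U₀⁻¹ * X₂) := by group
    rw [heq]; exact G.mul_mem hg₀ hU₀X₂
  refine ⟨(c * Tu)⁻¹ * X₂, (c * Tu)⁻¹ * U₀, hg₂, hg₀, ?_⟩
  have hy₀ : (U₀ : F) = 1 + f := by
    rw [hU₀def]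
    show y (l none) = 1 + f
    rw [hline, hv_none]
    ring
  have hy₂ : (X₂ : F) = (1 + f) + ((c : F) * z) * T := by
    rw [hX₂def]
    show y (l (some q₀)) = _
    have hvq : v (some q₀) = (c : F) * z := rfl
    rw [hline, hvq]
  have hcF : (c : F) ≠ 0 := Units.ne_zero c
  have hTuv : (Tu : F) = T := rfl
  have hcT : (c : F) * T ≠ 0 := mul_ne_zero hcF hT0
  push_cast
  rw [hTuv, hy₀, hy₂]
  field_simp
  ring
end

section
/- Let F be an infinite field and G a subgroup of F^× of finite odd index. Then G + G = F, i.e., every element of F is a sum of two elements of G. -/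
/-- In an infinite field (indeed any infinite additive group with cancellation) one can find,
for every `N`, a family of `N` elements all of whose nonempty subset sums are nonzero. -/
private lemma exists_lam (F : Type*) [Field F] [Infinite F] :
    ∀ N : ℕ, ∃ lam : Fin N → F, ∀ s : Finset (Fin N), s.Nonempty → ∑ i ∈ s, lam i ≠ 0 := by
  intro N
  induction N with
  | zero =>
      refine ⟨fun i => i.elim0, ?_⟩
      rintro s ⟨i, -⟩
      exact i.elim0
  | succ N ih =>
      classical
      obtain ⟨lam, hlam⟩ := ih
      obtain ⟨x, hx⟩ := Infinite.exists_notMem_finset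
        ((Finset.univ : Finset (Finset (Fin N))).image fun s => -∑ i ∈ s, lam i)
      refine ⟨Fin.snoc lam x, ?_⟩
      intro s hs
      set t : Finset (Fin N) := Finset.univ.filter (fun j : Fin N => j.castSucc ∈ s) with ht
      have himg : t.image Fin.castSucc = s.erase (Fin.last N) := by
        ext i
        simp only [t, Finset.mem_image, Finset.mem_filter, Finset.mem_univ, true_and,
          Finset.mem_erase]
        constructor
        · rintro ⟨j, hj, rfl⟩
          exact ⟨(Fin.castSucc_lt_last j).ne, hj⟩
        · rintro ⟨hne, hi⟩
          obtain ⟨j, rfl⟩ := Fin.exists_castSucc_eq.mpr hne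
          exact ⟨j, hi, rfl⟩
      have hsum : ∑ i ∈ s.erase (Fin.last N), Fin.snoc lam x i = ∑ j ∈ t, lam j := by
        rw [← himg, Finset.sum_image (fun a _ b _ h => Fin.castSucc_injective _ h)]
        exact Finset.sum_congr rfl fun j _ => by simp
      by_cases hmem : Fin.last N ∈ s
      · have hrw : ∑ i ∈ s, Fin.snoc lam x i = x + ∑ j ∈ t, lam j := by
          rw [← Finset.add_sum_erase _ _ hmem, hsum, Fin.snoc_last]
        rw [hrw]
        intro h0
        exact hx (Finset.mem_image.mpr ⟨t, Finset.mem_univ _,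
          neg_eq_of_add_eq_zero_left h0⟩)
      · have hrw : ∑ i ∈ s, Fin.snoc lam x i = ∑ j ∈ t, lam j := by
          rw [← Finset.erase_eq_of_notMem hmem, hsum]
        rw [hrw]
        apply hlam
        obtain ⟨i, hi⟩ := hs
        have hne : i ≠ Fin.last N := fun h => hmem (h ▸ hi)
        obtain ⟨j, rfl⟩ := Fin.exists_castSucc_eq.mpr hne
        exact ⟨j, Finset.mem_filter.mpr ⟨Finset.mem_univ _, hi⟩⟩

/-- If `F` is an infinite field and `G` is a subgroup of `F^×` of finite odd
index, then `G + G = F`. -/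
theorem stmt_6 (F : Type*) [Field F] [Infinite F] (G : Subgroup Fˣ)
    (hG : Odd G.index) :
    ∀ z : F, ∃ x y : Fˣ, x ∈ G ∧ y ∈ G ∧ (x : F) + (y : F) = z := by
  classical
  -- the quotient is finite
  have hn0 : G.index ≠ 0 := by
    intro h
    rw [h] at hG
    simp [Nat.odd_iff] at hG
  haveI hfinQ : Finite (Fˣ ⧸ G) :=
    Nat.finite_of_card_ne_zero (by rwa [← Subgroup.index_eq_card])
  haveI : Fintype (Fˣ ⧸ G) := Fintype.ofFinite _
  -- `-1 ∈ G` since the index is odd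
  have hneg : (-1 : Fˣ) ∈ G := by
    have h2 : (QuotientGroup.mk' G) (-1 : Fˣ) ^ 2 = 1 := by
      rw [← map_pow, neg_one_sq, map_one]
    have hd2 : orderOf ((QuotientGroup.mk' G) (-1 : Fˣ)) ∣ 2 :=
      orderOf_dvd_of_pow_eq_one h2
    have hdn : orderOf ((QuotientGroup.mk' G) (-1 : Fˣ)) ∣ G.index := by
      rw [Subgroup.index_eq_card]
      exact orderOf_dvd_natCard _
    have hq1 : (QuotientGroup.mk' G) (-1 : Fˣ) = 1 := by
      rcases (Nat.dvd_prime Nat.prime_two).mp hd2 with h | h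
      · exact orderOf_eq_one_iff.mp h
      · exfalso
        rw [h] at hdn
        obtain ⟨k, hk⟩ := hdn
        obtain ⟨m, hm⟩ := hG
        omega
    rw [QuotientGroup.mk'_apply] at hq1
    exact (QuotientGroup.eq_one_iff (-1 : Fˣ)).mp hq1
  -- coset representatives
  have hsurj : Function.Surjective (QuotientGroup.mk : Fˣ → Fˣ ⧸ G) :=
    QuotientGroup.mk_surjective
  choose rep hrep using hsurj
  -- the embedding of the alphabet into `F`
  set emb : Option (Fˣ ⧸ G) → F := fun o => Option.elim o 0 (fun θ => ((rep θ : Fˣ) : F))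
    with hemb
  -- the coloring of `F` by coset (or "zero")
  set chi : F → Option (Fˣ ⧸ G) :=
    fun w => if h : w = 0 then none else some (QuotientGroup.mk (Units.mk0 w h)) with hchi
  -- Hales–Jewett
  obtain ⟨ι, hι, hHJ⟩ :=
    Combinatorics.Line.exists_mono_in_high_dimension (Option (Fˣ ⧸ G)) (Option (Fˣ ⧸ G))
  haveI := hι
  obtain ⟨lam0, hlam0⟩ := exists_lam F (Fintype.card ι)
  set e : ι ≃ Fin (Fintype.card ι) := Fintype.equivFin ι with he
  set lam : ι → F := fun i => lam0 (e i) with hlamdef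
  have hlam : ∀ s : Finset ι, s.Nonempty → ∑ i ∈ s, lam i ≠ 0 := by
    intro s hs
    have hrw : ∑ i ∈ s, lam i = ∑ j ∈ s.image e, lam0 j := by
      rw [Finset.sum_image (fun a _ b _ h => e.injective h)]
    rw [hrw]
    exact hlam0 _ (hs.image e)
  obtain ⟨l, c, hc⟩ := hHJ fun v => chi (∑ i, lam i * emb (v i))
  -- the line is an affine map `x ↦ V * emb x + a`
  set W : Finset ι := Finset.univ.filter (fun i => l.idxFun i = none) with hW
  set V : F := ∑ i ∈ W, lam i with hVdef
  have hV : V ≠ 0 := by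
    obtain ⟨i0, hi0⟩ := l.proper
    exact hlam W ⟨i0, Finset.mem_filter.mpr ⟨Finset.mem_univ _, hi0⟩⟩
  set a : F := ∑ i ∈ Finset.univ.filter (fun i => ¬ l.idxFun i = none),
      lam i * emb ((l.idxFun i).getD none) with hadef
  have key : ∀ x, chi (V * emb x + a) = c := by
    intro x
    have hx : chi (∑ i, lam i * emb ((l.idxFun i).getD x)) = c := hc x
    have hsplit : (∑ i, lam i * emb ((l.idxFun i).getD x)) = V * emb x + a := by
      rw [← Finset.sum_filter_add_sum_filter_not Finset.univ (fun i => l.idxFun i = none)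
        (fun i => lam i * emb ((l.idxFun i).getD x))]
      congr 1
      · rw [hVdef, Finset.sum_mul]
        refine Finset.sum_congr rfl fun i hi => ?_
        rw [(Finset.mem_filter.mp hi).2]
        rfl
      · refine Finset.sum_congr rfl fun i hi => ?_
        obtain ⟨b, hb⟩ := Option.ne_none_iff_exists'.mp (Finset.mem_filter.mp hi).2
        rw [hb]
        rfl
    rw [← hsplit]
    exact hx
  have h0 : chi a = c := by
    have h := key none
    simpa [hemb] using h
  have hane : a ≠ 0 := by
    intro h0'
    have h1 : c = none := by
      rw [← h0, hchi]
      simp [h0']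
    have h2 := key (some 1)
    rw [h1, hchi] at h2
    have harg : V * emb (some 1) + a ≠ 0 := by
      rw [h0', add_zero]
      exact mul_ne_zero hV (Units.ne_zero _)
    simp only [dif_neg harg] at h2
    exact Option.some_ne_none _ h2
  have hc_eq : c = some (QuotientGroup.mk (Units.mk0 a hane)) := by
    rw [← h0, hchi]
    simp only [dif_neg hane]
  -- the main fact: every coset class is reached
  have main : ∀ θ : Fˣ ⧸ G, ∃ t : Fˣ, t ∈ G ∧
      (t : F) * a = V * ((rep θ : Fˣ) : F) + a := by
    intro θ
    have h2 := key (some θ)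
    rw [hc_eq, hchi] at h2
    have hwne : V * emb (some θ) + a ≠ 0 := by
      intro h0'
      simp only [dif_pos h0'] at h2
      exact Option.some_ne_none _ h2.symm
    simp only [dif_neg hwne] at h2
    have hmk := Option.some_injective _ h2
    have hmem : (Units.mk0 (V * emb (some θ) + a) hwne)⁻¹ * Units.mk0 a hane ∈ G :=
      QuotientGroup.eq.mp hmk
    refine ⟨(Units.mk0 a hane)⁻¹ * Units.mk0 (V * emb (some θ) + a) hwne, ?_, ?_⟩
    · have hinv := G.inv_mem hmem
      rwa [mul_inv_rev, inv_inv] at hinv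
    · have hval : (((Units.mk0 a hane)⁻¹ * Units.mk0 (V * emb (some θ) + a) hwne : Fˣ) : F)
          = a⁻¹ * (V * emb (some θ) + a) := by
        rw [Units.val_mul, Units.val_inv_eq_inv_val]
        simp
      rw [hval]
      have hembθ : emb (some θ) = ((rep θ : Fˣ) : F) := rfl
      rw [hembθ]
      field_simp
  -- conclusion
  intro z
  by_cases hz : z = 0
  · refine ⟨1, -1, G.one_mem, hneg, ?_⟩
    rw [hz]
    simp
  · set zu := Units.mk0 z hz with hzu
    set au := Units.mk0 a hane with hau
    set Vu := Units.mk0 V hV with hVu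
    set θ : Fˣ ⧸ G := QuotientGroup.mk (zu * au * Vu⁻¹) with hθ
    obtain ⟨t, htG, hteq⟩ := main θ
    set su : Fˣ := zu * au * Vu⁻¹ * (rep θ)⁻¹ with hsu
    have hsG : su ∈ G := by
      have h1 : ((su : Fˣ) : Fˣ ⧸ G) = 1 := by
        have hmm : ((zu * au * Vu⁻¹ * (rep θ)⁻¹ : Fˣ) : Fˣ ⧸ G)
            = ((zu * au * Vu⁻¹ : Fˣ) : Fˣ ⧸ G) * (((rep θ : Fˣ) : Fˣ ⧸ G))⁻¹ := by
          rw [QuotientGroup.mk_mul, QuotientGroup.mk_inv]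
        rw [hsu, hmm, hrep θ, ← hθ, mul_inv_cancel]
      exact (QuotientGroup.eq_one_iff su).mp h1
    refine ⟨t * su, -su, G.mul_mem htG hsG, ?_, ?_⟩
    · rw [← neg_one_mul]
      exact G.mul_mem hneg hsG
    · rw [Units.val_mul, Units.val_neg]
      have hrne : ((rep θ : Fˣ) : F) ≠ 0 := Units.ne_zero _
      have hsval : (su : F) = z * a * V⁻¹ * ((rep θ : Fˣ) : F)⁻¹ := by
        rw [hsu, Units.val_mul, Units.val_mul, Units.val_mul,
          Units.val_inv_eq_inv_val, Units.val_inv_eq_inv_val]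
        simp [hzu, hau, hVu]
      have ht2 : (t : F) = (V * ((rep θ : Fˣ) : F) + a) / a := (eq_div_iff hane).mpr hteq
      rw [hsval, ht2]
      field_simp
      ring
end

section
/- Let F be an infinite field and G a subgroup of F^× of finite index r, with coset representatives x_1, …, x_r of G in F^×. Then there exists c ∈ F^× such that 1 + c·x_i ∈ G for all i = 1, …, r. -/
open Polynomial in
private lemma exists_weights (F : Type*) [Field F] [Infinite F] (ι : Type) [Fintype ι] :
    ∃ y : ι → F, ∀ S : Finset ι, S.Nonempty → (∑ j ∈ S, y j) ≠ 0 := by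
  classical
  obtain ⟨g, hg⟩ : ∃ g : ι → ℕ, Function.Injective g :=
    ⟨fun i => (Fintype.equivFin ι i : ℕ), fun a b h => by
      exact (Fintype.equivFin ι).injective (Fin.val_injective h)⟩
  have hne : ∀ S : Finset ι, S.Nonempty → (∑ j ∈ S, (X : F[X]) ^ (g j)) ≠ 0 := by
    intro S hS h
    obtain ⟨j, hj⟩ := hS
    have h1 : (∑ k ∈ S, (X : F[X]) ^ (g k)).coeff (g j) = 1 := by
      rw [Polynomial.finset_sum_coeff]
      simp only [Polynomial.coeff_X_pow]
      simp only [hg.eq_iff]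
      rw [Finset.sum_ite_eq S j (fun _ => (1:F))]
      simp [hj]
    rw [h] at h1
    simp at h1
  have hfin : (⋃ S ∈ {S : Finset ι | S.Nonempty},
      {c : F | (∑ j ∈ S, (X : F[X]) ^ (g j)).IsRoot c}).Finite :=
    Set.Finite.biUnion (Set.toFinite _) fun S hS =>
      Polynomial.finite_setOf_isRoot (hne S hS)
  obtain ⟨c, hc⟩ := (hfin.infinite_compl).nonempty
  refine ⟨fun j => c ^ (g j), fun S hS h => ?_⟩
  apply hc
  refine Set.mem_biUnion hS ?_
  simp only [Set.mem_setOf_eq, Polynomial.IsRoot, Polynomial.eval_finset_sum]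
  simpa using h



/-- Let `F` be an infinite field, `G` a subgroup of `F^×` of finite index `r`,
and `x₁, …, x_r` a complete set of coset representatives for `G` in `F^×`
(i.e. `i ↦ x_i G` is a bijection onto `F^× / G`). Then there is `c ∈ F^×`
such that `1 + c·x_i ∈ G` for all `i`. -/
theorem stmt_7 (F : Type*) [Field F] [Infinite F] (G : Subgroup Fˣ)
    (r : ℕ) (hr : G.index = r) (x : Fin r → Fˣ)
    (hx : Function.Bijective (fun i : Fin r => (QuotientGroup.mk (x i) : Fˣ ⧸ G))) :
    ∃ c : Fˣ, ∀ i : Fin r, ∃ u : Fˣ, u ∈ G ∧ (u : F) = 1 + (c : F) * (x i : F) := by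
  classical
  rcases Nat.eq_zero_or_pos r with hr0 | hrpos
  · subst hr0; exact ⟨1, fun i => i.elim0⟩
  haveI hfin : Finite (Fˣ ⧸ G) := by
    have h1 : Nat.card (Fˣ ⧸ G) = r := by rw [← Subgroup.index_eq_card, hr]
    exact (Nat.card_ne_zero.mp (by omega)).2
  haveI : Finite (Option (Fˣ ⧸ G)) := by
    haveI := Fintype.ofFinite (Fˣ ⧸ G); infer_instance
  obtain ⟨ι, hι, hn⟩ :=
    Combinatorics.Line.exists_mono_in_high_dimension (Option (Fin r)) (Option (Fˣ ⧸ G))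
  obtain ⟨y, hy⟩ := exists_weights F ι
  set z : Option (Fin r) → F := fun o => o.elim 0 (fun a => (x a : F)) with hz
  set φ : F → Option (Fˣ ⧸ G) := fun t =>
    if h : t = 0 then none else some (QuotientGroup.mk (Units.mk0 t h)) with hφ
  obtain ⟨l, k0, hk0⟩ := hn (fun w => φ (∑ j, y j * z (w j)))
  set A : Finset ι := Finset.univ.filter (fun j => l.idxFun j = none) with hA
  set W : F := ∑ j ∈ A, y j with hW
  have hAne : A.Nonempty := by
    obtain ⟨j, hj⟩ := l.proper
    exact ⟨j, by simp [hA, hj]⟩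
  have hWne : W ≠ 0 := hy A hAne
  set T : F := ∑ j ∈ Finset.univ.filter (fun j => ¬ l.idxFun j = none),
      y j * z ((l.idxFun j).getD none) with hT
  have key : ∀ o, (∑ j, y j * z ((l.idxFun j).getD o)) = W * z o + T := by
    intro o
    rw [← Finset.sum_filter_add_sum_filter_not Finset.univ (fun j => l.idxFun j = none)]
    congr 1
    · rw [hW, Finset.sum_mul]
      refine Finset.sum_congr rfl fun j hj => ?_
      rw [Finset.mem_filter] at hj
      rw [hj.2, Option.getD_none]
    · refine Finset.sum_congr rfl fun j hj => ?_
      rw [Finset.mem_filter] at hj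
      obtain ⟨b, hb⟩ := Option.ne_none_iff_exists'.mp hj.2
      rw [hb]
      rfl
  have hcol : ∀ o, φ (W * z o + T) = k0 := by
    intro o
    rw [← key o]
    exact hk0 o
  have hz0 : z none = 0 := rfl
  have hzi : ∀ i : Fin r, z (some i) = (x i : F) := fun i => rfl
  have hφ_none : ∀ t : F, φ t = none → t = 0 := by
    intro t h
    by_contra ht
    simp only [hφ, dif_neg ht] at h
    exact nomatch h
  have hφ_some : ∀ (t : F) (ht : t ≠ 0),
      φ t = some (QuotientGroup.mk (Units.mk0 t ht)) := by
    intro t ht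
    simp only [hφ, dif_neg ht]
  have hφ0 : φ 0 = none := by simp [hφ]
  obtain ⟨i0⟩ : Nonempty (Fin r) := ⟨⟨0, hrpos⟩⟩
  have h1' := hcol none
  rw [hz0, mul_zero, zero_add] at h1'
  have hTne : T ≠ 0 := by
    intro hT0
    rw [hT0, hφ0] at h1'
    have h2 := hcol (some i0)
    rw [hzi, hT0, add_zero, ← h1'] at h2
    have := hφ_none _ h2
    exact mul_ne_zero hWne (Units.ne_zero (x i0)) this
  rw [hφ_some T hTne] at h1'
  refine ⟨Units.mk0 W hWne * (Units.mk0 T hTne)⁻¹, fun i => ?_⟩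
  have h2 := hcol (some i)
  rw [hzi] at h2
  have h3 : W * (x i : F) + T ≠ 0 := by
    intro h0
    rw [h0, hφ0, ← h1'] at h2
    exact nomatch h2
  rw [hφ_some _ h3, ← h1', Option.some_inj] at h2
  have hmem : (Units.mk0 (W * (x i : F) + T) h3)⁻¹ * Units.mk0 T hTne ∈ G :=
    QuotientGroup.eq.mp h2
  refine ⟨((Units.mk0 (W * (x i : F) + T) h3)⁻¹ * Units.mk0 T hTne)⁻¹, inv_mem hmem, ?_⟩
  rw [mul_inv_rev, inv_inv]
  simp only [Units.val_mul, Units.val_inv_eq_inv_val, Units.val_mk0]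
  field_simp
  ring
end

section
/- Let p ≥ 7 be a prime with p ≡ 3 (mod 4), and let G = (F_p^×)^2 be the subgroup of nonzero squares. Then in the quotient F_p/G: every nonzero element of F_p is a sum of two nonzero squares and also a sum of two nonsquares, 0 is not a sum of two nonzero squares, 0 is not a sum of two nonsquares, and 0 is a sum of a nonzero square and a nonsquare. (So F_p/(F_p^×)^2 is the weak hyperfield of signs W.) -/
section Aux

variable {p : ℕ} [Fact p.Prime]

lemma aux_natne (hp7 : 7 ≤ p) {n : ℕ} (hn : 0 < n) (hn7 : n < 7) : (n : ZMod p) ≠ 0 := by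
  intro h
  have hd := (ZMod.natCast_eq_zero_iff n p).mp h
  have := Nat.le_of_dvd hn hd
  omega

lemma aux_neg_one_nonsq (hp4 : p % 4 = 3) : ¬ IsSquare (-1 : ZMod p) := by
  rw [ZMod.exists_sq_eq_neg_one_iff]
  simp [hp4]

lemma aux_sq0 (hp4 : p % 4 = 3) {a b : ZMod p} (ha : a ≠ 0) (h : a ^ 2 + b ^ 2 = 0) :
    False := by
  apply aux_neg_one_nonsq hp4
  refine ⟨b * a⁻¹, ?_⟩
  have hb2 : b ^ 2 = -a ^ 2 := by linear_combination h
  field_simp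
  linear_combination -hb2

lemma aux_sumsq (hp7 : 7 ≤ p) (hp4 : p % 4 = 3) {z : ZMod p} (hz : z ≠ 0) :
    ∃ x y : ZMod p, x ≠ 0 ∧ y ≠ 0 ∧ x ^ 2 + y ^ 2 = z := by
  have h3 : (3 : ZMod p) ≠ 0 := aux_natne hp7 (by norm_num) (by norm_num) (n := 3)
  have h4 : (4 : ZMod p) ≠ 0 := aux_natne hp7 (by norm_num) (by norm_num) (n := 4)
  have h5 : (5 : ZMod p) ≠ 0 := aux_natne hp7 (by norm_num) (by norm_num) (n := 5)
  by_cases hsq : IsSquare z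
  · obtain ⟨c, rfl⟩ := hsq
    have hc : c ≠ 0 := by intro h; apply hz; rw [h, mul_zero]
    refine ⟨3 * c / 5, 4 * c / 5, ?_, ?_, ?_⟩
    · exact div_ne_zero (mul_ne_zero h3 hc) h5
    · exact div_ne_zero (mul_ne_zero h4 hc) h5
    · field_simp
      ring
  · obtain ⟨a, b, hab⟩ := ZMod.sq_add_sq p z
    refine ⟨a, b, ?_, ?_, hab⟩
    · intro h
      exact hsq ⟨b, by rw [← hab, h]; ring⟩
    · intro h
      exact hsq ⟨a, by rw [← hab, h]; ring⟩

lemma aux_neg_sq (hp4 : p % 4 = 3) {a : ZMod p} (ha : a ≠ 0) (hns : ¬ IsSquare a) :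
    IsSquare (-a) := by
  classical
  have h1 : quadraticChar (ZMod p) a = -1 := quadraticChar_neg_one_iff_not_isSquare.mpr hns
  have h2 : quadraticChar (ZMod p) (-1) = -1 :=
    quadraticChar_neg_one_iff_not_isSquare.mpr (aux_neg_one_nonsq hp4)
  have h3 : quadraticChar (ZMod p) (-a) = 1 := by
    have := map_mul (quadraticChar (ZMod p)) (-1) a
    rw [neg_one_mul, h1, h2] at this
    rw [this]; norm_num
  exact (quadraticChar_one_iff_isSquare (neg_ne_zero.mpr ha)).mp h3

end Aux

/-- For a prime `p ≥ 7` with `p ≡ 3 (mod 4)`, writing `Sq x` for "`x` is a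
nonzero square" and `NSq x` for "`x` is a nonsquare" in `F_p`: every nonzero
element is a sum of two nonzero squares and a sum of two nonsquares; `0` is
not a sum of two nonzero squares nor of two nonsquares; and `0` is a sum of a
nonzero square and a nonsquare. (So `F_p/(F_p^×)² ≅ W`.) -/
theorem stmt_12 (p : ℕ) (hp : p.Prime) (hp7 : 7 ≤ p) (hp4 : p % 4 = 3) :
    (∀ z : ZMod p, z ≠ 0 → ∃ a b : ZMod p,
      (∃ x, x ≠ 0 ∧ x ^ 2 = a) ∧ (∃ y, y ≠ 0 ∧ y ^ 2 = b) ∧ a + b = z) ∧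
    (∀ z : ZMod p, z ≠ 0 → ∃ a b : ZMod p,
      (a ≠ 0 ∧ ¬∃ x, x ^ 2 = a) ∧ (b ≠ 0 ∧ ¬∃ y, y ^ 2 = b) ∧ a + b = z) ∧
    (¬∃ a b : ZMod p,
      (∃ x, x ≠ 0 ∧ x ^ 2 = a) ∧ (∃ y, y ≠ 0 ∧ y ^ 2 = b) ∧ a + b = 0) ∧
    (¬∃ a b : ZMod p,
      (a ≠ 0 ∧ ¬∃ x, x ^ 2 = a) ∧ (b ≠ 0 ∧ ¬∃ y, y ^ 2 = b) ∧ a + b = 0) ∧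
    (∃ a b : ZMod p,
      (∃ x, x ≠ 0 ∧ x ^ 2 = a) ∧ (b ≠ 0 ∧ ¬∃ y, y ^ 2 = b) ∧ a + b = 0) := by
  haveI : Fact p.Prime := ⟨hp⟩
  have hneg1 : ¬ IsSquare (-1 : ZMod p) := aux_neg_one_nonsq hp4
  refine ⟨?_, ?_, ?_, ?_, ?_⟩
  · -- every nonzero z is a sum of two nonzero squares
    intro z hz
    obtain ⟨x, y, hx, hy, hxy⟩ := aux_sumsq hp7 hp4 hz
    exact ⟨x ^ 2, y ^ 2, ⟨x, hx, rfl⟩, ⟨y, hy, rfl⟩, hxy⟩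
  · -- every nonzero z is a sum of two nonsquares
    intro z hz
    obtain ⟨x, y, hx, hy, hxy⟩ := aux_sumsq hp7 hp4 (neg_ne_zero.mpr hz)
    have key : ∀ w : ZMod p, w ≠ 0 → ¬ ∃ t : ZMod p, t ^ 2 = -(w ^ 2) := by
      intro w hw ⟨t, ht⟩
      exact aux_sq0 hp4 hw (b := t) (by linear_combination ht)
    refine ⟨-(x ^ 2), -(y ^ 2), ⟨?_, key x hx⟩, ⟨?_, key y hy⟩, by linear_combination -hxy⟩
    · exact neg_ne_zero.mpr (pow_ne_zero 2 hx)
    · exact neg_ne_zero.mpr (pow_ne_zero 2 hy)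
  · -- 0 is not a sum of two nonzero squares
    rintro ⟨a, b, ⟨x, hx, rfl⟩, ⟨y, hy, rfl⟩, h⟩
    exact aux_sq0 hp4 hx h
  · -- 0 is not a sum of two nonsquares
    rintro ⟨a, b, ⟨ha, hans⟩, ⟨hb, hbns⟩, h⟩
    have hb' : b = -a := by linear_combination h
    have : IsSquare (-a) := aux_neg_sq hp4 ha (fun ⟨t, ht⟩ => hans ⟨t, by rw [sq, ← ht]⟩)
    obtain ⟨t, ht⟩ := this
    exact hbns ⟨t, by rw [sq, ← ht, hb']⟩
  · -- 0 = 1 + (-1)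
    refine ⟨1, -1, ⟨1, one_ne_zero, one_pow 2⟩, ⟨neg_ne_zero.mpr one_ne_zero, ?_⟩, by ring⟩
    rintro ⟨y, hy⟩
    exact hneg1 ⟨y, by rw [← hy, sq]⟩
end

section
/- Let q ≥ 7 be a prime power with q ≡ 1 (mod 4) and let G be the subgroup of nonzero squares in F_q^×. Then: 0 ∈ G + G, 0 ∈ (cG) + (cG) for c a nonsquare, every nonzero element of F_q is a sum of two nonzero squares, and every nonzero element is a sum of a nonzero square and a nonsquare. (So the quotient hyperfield F_q/G satisfies 1 ⊞ 1 = {0,1,−1} = H and 1 ⊞ (−1) = H^×.) -/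
section Aux

variable {F : Type*} [Field F] [Fintype F]

/-- Key lemma: there is a nonzero square and a nonsquare summing to 1. -/
lemma key_sq_nonsq (hq7 : 7 ≤ Fintype.card F) (hq4 : Fintype.card F % 4 = 1) :
    ∃ σ u : F, σ ≠ 0 ∧ ¬ IsSquare u ∧ σ ^ 2 + u = 1 := by
  classical
  by_contra hcon
  push_neg at hcon
  have hodd : Fintype.card F % 2 = 1 := by omega
  have hchar : ringChar F ≠ 2 := fun h => by
    have := (FiniteField.even_card_iff_char_two (F := F)).mp h; omega
  have hneg1 : IsSquare (-1 : F) := FiniteField.isSquare_neg_one_iff.mpr (by omega)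
  have h1T : ∀ s : F, IsSquare s → IsSquare (1 - s) := by
    intro s hs
    by_cases h0 : s = 0
    · simp [h0]
    · obtain ⟨τ, rfl⟩ := hs
      by_contra hns
      have hτ : τ ≠ 0 := fun h => h0 (by simp [h])
      exact absurd (by ring) (hcon τ (1 - τ * τ) hτ hns)
  have hsub : ∀ x y : F, IsSquare x → IsSquare y → IsSquare (x - y) := by
    intro x y hx hy
    by_cases h0 : x = 0
    · have : x - y = -1 * y := by rw [h0]; ring
      rw [this]; exact hneg1.mul hy
    · have hxy : x - y = x * (1 - y * x⁻¹) := by field_simp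
      rw [hxy]
      exact hx.mul (h1T _ (hy.mul hx.inv))
  let T : AddSubgroup F :=
    { carrier := {x | IsSquare x}
      zero_mem' := ⟨0, by simp⟩
      add_mem' := fun {a b} ha hb => by
        have h : a + b = a - (0 - b) := by ring
        show IsSquare (a + b)
        rw [h]
        exact hsub _ _ ha (hsub 0 b ⟨0, by simp⟩ hb)
      neg_mem' := fun {a} ha => by
        have h : -a = 0 - a := by ring
        show IsSquare (-a)
        rw [h]
        exact hsub 0 a ⟨0, by simp⟩ ha }
  set S : Finset F := Finset.univ.filter (fun x : F => IsSquare x) with hSdef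
  have hdvd : S.card ∣ Fintype.card F := by
    have hd := AddSubgroup.card_addSubgroup_dvd_card T
    have hcT : Nat.card T = S.card := by
      have : Nat.card T = Fintype.card {x : F // IsSquare x} := by
        rw [Nat.card_eq_fintype_card]
        exact Fintype.card_congr (Equiv.refl _)
      rw [this, Fintype.card_subtype]
    rwa [hcT, Nat.card_eq_fintype_card] at hd
  have himg : Finset.image (fun x : F => x * x) Finset.univ = S := by
    ext a
    rw [hSdef, Finset.mem_filter]
    simp [IsSquare, eq_comm]
  have hle : Fintype.card F ≤ 2 * S.card := by
    rw [← himg, ← Finset.card_univ]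
    apply Finset.card_le_mul_card_image
    intro b hb
    obtain ⟨x0, -, hx0⟩ := Finset.mem_image.mp hb
    have hsubset : Finset.univ.filter (fun a : F => a * a = b) ⊆ {x0, -x0} := by
      intro a ha
      simp only [Finset.mem_filter, Finset.mem_univ, true_and] at ha
      have : (a - x0) * (a + x0) = 0 := by
        have : a * a = x0 * x0 := by rw [ha, hx0]
        linear_combination this
      rcases mul_eq_zero.mp this with h | h
      · simp [sub_eq_zero.mp h]
      · simp [eq_neg_of_add_eq_zero_left h]
    exact (Finset.card_le_card hsubset).trans
      ((Finset.card_insert_le _ _).trans (by simp))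
  obtain ⟨k, hk⟩ := hdvd
  have hSpos : 0 < S.card := Finset.card_pos.mpr ⟨0, by simp [hSdef]⟩
  have hk1 : k = 1 := by
    rcases k with _ | _ | _ | k
    · omega
    · rfl
    · omega
    · nlinarith
  have hSuniv : S = Finset.univ := by
    apply Finset.eq_univ_of_card
    rw [hk1, mul_one] at hk
    omega
  obtain ⟨c, hc⟩ := FiniteField.exists_nonsquare (F := F) hchar
  have : c ∈ S := hSuniv ▸ Finset.mem_univ c
  exact hc (by simpa [hSdef] using this)

end Aux

/-- For a finite field `F` with `q ≥ 7` elements and `q ≡ 1 (mod 4)`, with `G`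
the group of nonzero squares: `0 ∈ G + G`; `0 ∈ cG + cG` for any nonsquare
`c ≠ 0`; every nonzero element is a sum of two nonzero squares; and every
nonzero element is a sum of a nonzero square and a nonsquare. -/
theorem stmt_13 (F : Type*) [Field F] [Fintype F]
    (hq7 : 7 ≤ Fintype.card F) (hq4 : Fintype.card F % 4 = 1) :
    (∃ x y : F, x ≠ 0 ∧ y ≠ 0 ∧ x ^ 2 + y ^ 2 = 0) ∧
    (∀ c : F, c ≠ 0 → (¬∃ x, x ^ 2 = c) →
      ∃ x y : F, x ≠ 0 ∧ y ≠ 0 ∧ c * x ^ 2 + c * y ^ 2 = 0) ∧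
    (∀ z : F, z ≠ 0 → ∃ x y : F, x ≠ 0 ∧ y ≠ 0 ∧ x ^ 2 + y ^ 2 = z) ∧
    (∀ z : F, z ≠ 0 → ∃ a b : F,
      (∃ x, x ≠ 0 ∧ x ^ 2 = a) ∧ (b ≠ 0 ∧ ¬∃ y, y ^ 2 = b) ∧ a + b = z) := by
  classical
  have hodd : Fintype.card F % 2 = 1 := by omega
  have hchar : ringChar F ≠ 2 := fun h => by
    have := (FiniteField.even_card_iff_char_two (F := F)).mp h; omega
  have h2 : (2 : F) ≠ 0 := Ring.two_ne_zero hchar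
  obtain ⟨i, hi⟩ : IsSquare (-1 : F) :=
    FiniteField.isSquare_neg_one_iff.mpr (by omega)
  -- hi : -1 = i * i
  have hi2 : i ^ 2 = -1 := by rw [sq]; exact hi.symm
  have hi0 : i ≠ 0 := by intro h; rw [h] at hi2; norm_num at hi2
  refine ⟨⟨1, i, one_ne_zero, hi0, by linear_combination hi2⟩, ?_, ?_, ?_⟩
  · intro c hc _
    exact ⟨1, i, one_ne_zero, hi0, by linear_combination c * hi2⟩
  · -- every nonzero element is a sum of two nonzero squares
    intro z hz
    set p : F := if h : ∃ a : F, a ^ 2 = z then h.choose else 0 with hp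
    set r : F := if h : ∃ a : F, a ^ 2 = -z then h.choose else 0 with hr
    have hex : ∃ s : F, s ∉ ({0, p, -p, r, -r} : Finset F) := by
      by_contra hcon
      push_neg at hcon
      have huniv : (Finset.univ : Finset F) ⊆ {0, p, -p, r, -r} :=
        fun x _ => hcon x
      have h5 : ({0, p, -p, r, -r} : Finset F).card ≤ 5 := by
        refine (Finset.card_insert_le _ _).trans (Nat.succ_le_succ ?_)
        refine (Finset.card_insert_le _ _).trans (Nat.succ_le_succ ?_)
        refine (Finset.card_insert_le _ _).trans (Nat.succ_le_succ ?_)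
        refine (Finset.card_insert_le _ _).trans (Nat.succ_le_succ ?_)
        simp
      have := Finset.card_le_card huniv
      rw [Finset.card_univ] at this
      omega
    obtain ⟨s, hs⟩ := hex
    simp only [Finset.mem_insert, Finset.mem_singleton, not_or] at hs
    obtain ⟨hs0, hsp, hsp', hsr, hsr'⟩ := hs
    have hsz : s ^ 2 ≠ z := by
      intro h
      have hex : ∃ a : F, a ^ 2 = z := ⟨s, h⟩
      have hpz : p ^ 2 = z := by rw [hp, dif_pos hex]; exact hex.choose_spec
      have : (s - p) * (s + p) = 0 := by
        have : s ^ 2 = p ^ 2 := by rw [h, hpz]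
        linear_combination this
      rcases mul_eq_zero.mp this with h' | h'
      · exact hsp (sub_eq_zero.mp h')
      · exact hsp' (eq_neg_of_add_eq_zero_left h')
    have hsz' : s ^ 2 ≠ -z := by
      intro h
      have hex : ∃ a : F, a ^ 2 = -z := ⟨s, h⟩
      have hrz : r ^ 2 = -z := by rw [hr, dif_pos hex]; exact hex.choose_spec
      have : (s - r) * (s + r) = 0 := by
        have : s ^ 2 = r ^ 2 := by rw [h, hrz]
        linear_combination this
      rcases mul_eq_zero.mp this with h' | h'
      · exact hsr (sub_eq_zero.mp h')
      · exact hsr' (eq_neg_of_add_eq_zero_left h')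
    set t : F := z / s with ht
    have hzt : s * t = z := by rw [ht]; field_simp
    have h2i : (2 : F) * i ≠ 0 := mul_ne_zero h2 hi0
    have h4ne : (4 : F) ≠ 0 := by
      have := mul_ne_zero h2 h2
      norm_num at this ⊢
      exact this
    have hst : s + t ≠ 0 := fun h => hsz' (by linear_combination s * h - hzt)
    have hts : t - s ≠ 0 := fun h => hsz (by linear_combination hzt - s * h)
    refine ⟨(s + t) / 2, (t - s) * i / 2, div_ne_zero hst h2,
      div_ne_zero (mul_ne_zero hts hi0) h2, ?_⟩
    apply mul_left_cancel₀ h4ne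
    have e : (4 : F) * (((s + t) / 2) ^ 2 + ((t - s) * i / 2) ^ 2)
        = (2 * ((s + t) / 2)) ^ 2 + (2 * ((t - s) * i / 2)) ^ 2 := by ring
    rw [e]
    have h2x : (2 : F) * ((s + t) / 2) = s + t := by field_simp
    have h2y : (2 : F) * ((t - s) * i / 2) = (t - s) * i := by field_simp
    rw [h2x, h2y]
    linear_combination (t - s) ^ 2 * hi2 + 4 * hzt
  · -- square + nonsquare
    intro z hz
    obtain ⟨σ, u, hσ, hu, hsum⟩ := key_sq_nonsq hq7 hq4
    have hu0 : u ≠ 0 := fun h => hu ⟨0, by simp [h]⟩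
    by_cases hzs : IsSquare z
    · obtain ⟨w, rfl⟩ := hzs
      have hw : w ≠ 0 := fun h => hz (by simp [h])
      refine ⟨σ ^ 2 * (w * w), u * (w * w), ⟨σ * w, mul_ne_zero hσ hw, by ring⟩,
        ⟨mul_ne_zero hu0 (mul_ne_zero hw hw), ?_⟩, by linear_combination (w * w) * hsum⟩
      rintro ⟨y, hy⟩
      apply hu
      exact ⟨y * w⁻¹, by field_simp; linear_combination -hy⟩
    · have hχz : quadraticChar F z = -1 := quadraticChar_neg_one_iff_not_isSquare.mpr hzs
      have hχu : quadraticChar F u = -1 := quadraticChar_neg_one_iff_not_isSquare.mpr hu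
      have hmul : IsSquare (z * u) := by
        rw [← quadraticChar_one_iff_isSquare (mul_ne_zero hz hu0)]
        rw [map_mul, hχz, hχu]; ring
      obtain ⟨v, hv⟩ := hmul
      have hv0 : v ≠ 0 := by
        intro h
        rw [h] at hv
        simp at hv
        rcases hv with h' | h' <;> [exact hz h'; exact hu0 h']
      refine ⟨z * u, z * σ ^ 2, ⟨v, hv0, by rw [sq]; exact hv.symm⟩,
        ⟨mul_ne_zero hz (pow_ne_zero 2 hσ), ?_⟩, by linear_combination z * hsum⟩
      rintro ⟨y, hy⟩
      apply hzs
      exact ⟨y * σ⁻¹, by field_simp; linear_combination -hy⟩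
end

section
/- Fix a prime p and let G = { x ∈ ℚ^× : 3 divides ord_p(x) }, where ord_p denotes the p-adic valuation. Then G is a subgroup of ℚ^× of index 3, and for the quotient hyperfield H = ℚ/G with elements {0, [1], [p], [p²]}: [1] ⊞ [1] = H (every class, including 0, is represented by a sum of two elements of G), while [1] ⊞ [p] = {[1], [p]}. -/
/-- Fix a prime `p` and let `G = {x ∈ ℚ^× : 3 ∣ ord_p x}` (encoded by the
predicate `P x := x ≠ 0 ∧ 3 ∣ padicValRat p x`). Then `G` is a subgroup of
`ℚ^×` of index 3 (the three cosets are `G, pG, p²G`, i.e. every nonzero `x`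
satisfies `P (x / p^k)` for exactly one `k ∈ {0,1,2}`), and in the quotient
hyperfield `ℚ/G`: `[1] ⊞ [1]` is everything (0 and each coset is a sum of two
elements of `G`), while `[1] ⊞ [p] = {[1], [p]}`. -/
theorem stmt_15 (p : ℕ) (hp : p.Prime) :
    (∀ x y : ℚ, (x ≠ 0 ∧ (3 : ℤ) ∣ padicValRat p x) →
      (y ≠ 0 ∧ (3 : ℤ) ∣ padicValRat p y) →
      (x * y ≠ 0 ∧ (3 : ℤ) ∣ padicValRat p (x * y))) ∧
    (∀ x : ℚ, (x ≠ 0 ∧ (3 : ℤ) ∣ padicValRat p x) →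
      (x⁻¹ ≠ 0 ∧ (3 : ℤ) ∣ padicValRat p x⁻¹)) ∧
    (∀ x : ℚ, x ≠ 0 → ∃! k : Fin 3,
      (3 : ℤ) ∣ padicValRat p (x / (p : ℚ) ^ (k : ℕ))) ∧
    (∃ a b : ℚ, (a ≠ 0 ∧ (3 : ℤ) ∣ padicValRat p a) ∧
      (b ≠ 0 ∧ (3 : ℤ) ∣ padicValRat p b) ∧ a + b = 0) ∧
    (∀ k : Fin 3, ∃ a b : ℚ, (a ≠ 0 ∧ (3 : ℤ) ∣ padicValRat p a) ∧
      (b ≠ 0 ∧ (3 : ℤ) ∣ padicValRat p b) ∧ a + b ≠ 0 ∧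
      (3 : ℤ) ∣ padicValRat p ((a + b) / (p : ℚ) ^ (k : ℕ))) ∧
    (∀ a b : ℚ, (a ≠ 0 ∧ (3 : ℤ) ∣ padicValRat p a) →
      (b ≠ 0 ∧ (3 : ℤ) ∣ padicValRat p (b / (p : ℚ))) →
      (a + b ≠ 0 ∧
        ((3 : ℤ) ∣ padicValRat p (a + b) ∨
         (3 : ℤ) ∣ padicValRat p ((a + b) / (p : ℚ))))) ∧
    (∃ a b : ℚ, (a ≠ 0 ∧ (3 : ℤ) ∣ padicValRat p a) ∧
      (b ≠ 0 ∧ (3 : ℤ) ∣ padicValRat p (b / (p : ℚ))) ∧ a + b ≠ 0 ∧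
      (3 : ℤ) ∣ padicValRat p (a + b)) ∧
    (∃ a b : ℚ, (a ≠ 0 ∧ (3 : ℤ) ∣ padicValRat p a) ∧
      (b ≠ 0 ∧ (3 : ℤ) ∣ padicValRat p (b / (p : ℚ))) ∧ a + b ≠ 0 ∧
      (3 : ℤ) ∣ padicValRat p ((a + b) / (p : ℚ))) := by
  haveI : Fact p.Prime := ⟨hp⟩
  have hp0 : (p:ℚ) ≠ 0 := Nat.cast_ne_zero.mpr hp.ne_zero
  have hvp : padicValRat p (p:ℚ) = 1 := padicValRat.self hp.one_lt
  have hpow : ∀ k : ℕ, padicValRat p ((p:ℚ)^k) = k := by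
    intro k; rw [padicValRat.pow (p:ℚ), hvp, mul_one]
  have hpowne : ∀ k : ℕ, ((p:ℚ))^k ≠ 0 := fun k => pow_ne_zero k hp0
  have hdiv : ∀ (x : ℚ) (k : ℕ), x ≠ 0 →
      padicValRat p (x / (p:ℚ)^k) = padicValRat p x - k := by
    intro x k hx
    rw [padicValRat.div hx (hpowne k), hpow]
  have hnat : ∀ n : ℕ, ¬ p ∣ n → padicValRat p (n:ℚ) = 0 := by
    intro n hn
    rw [padicValRat.of_nat, padicValNat.eq_zero_of_not_dvd hn]; rfl
  have hpm : ∀ m : ℕ, 1 ≤ m → padicValRat p ((p:ℚ)^m - 1) = 0 ∧ ((p:ℚ)^m - 1) ≠ 0 := by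
    intro m hm
    have h2 : 2 ≤ p := hp.two_le
    have hlt : 1 < p ^ m := Nat.one_lt_pow (by omega) (by omega)
    have hcast : ((p:ℚ))^m - 1 = ((p^m - 1 : ℕ) : ℚ) := by
      push_cast [Nat.cast_sub hlt.le]; ring
    have hnd : ¬ p ∣ (p^m - 1) := by
      intro h
      have h1 : p ∣ p^m - (p^m - 1) := Nat.dvd_sub (dvd_pow_self p (by omega)) h
      have h3 : p^m - (p^m - 1) = 1 := by omega
      rw [h3] at h1
      exact absurd (Nat.le_of_dvd one_pos h1) (by omega)
    refine ⟨by rw [hcast]; exact hnat _ hnd, ?_⟩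
    rw [hcast]
    exact Nat.cast_ne_zero.mpr (by omega)
  refine ⟨?_, ?_, ?_, ?_, ?_, ?_, ?_, ?_⟩
  · -- multiplicative closure
    rintro x y ⟨hx, hxd⟩ ⟨hy, hyd⟩
    exact ⟨mul_ne_zero hx hy, by rw [padicValRat.mul hx hy]; exact dvd_add hxd hyd⟩
  · -- inverses
    rintro x ⟨hx, hxd⟩
    exact ⟨inv_ne_zero hx, by rw [padicValRat.inv]; exact Dvd.dvd.neg_right hxd⟩
  · -- index 3
    intro x hx
    set v := padicValRat p x with hv
    refine ⟨⟨(v % 3).toNat, by omega⟩, ?_, ?_⟩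
    · show (3:ℤ) ∣ padicValRat p (x / (p:ℚ) ^ ((v % 3).toNat))
      rw [hdiv x _ hx]
      simp only [← hv]
      omega
    · rintro ⟨k, hk⟩ hkd
      rw [hdiv x _ hx] at hkd
      simp only [← hv] at hkd
      have : (k : ℤ) = v % 3 := by omega
      ext
      simp only [Fin.val_mk]
      omega
  · -- 0 ∈ [1] ⊞ [1]
    refine ⟨1, -1, ⟨one_ne_zero, by simp⟩, ⟨by norm_num, ?_⟩, by ring⟩
    rw [padicValRat.neg]; simp
  · -- every class in [1] ⊞ [1]
    intro k
    set m : ℕ := if (k : ℕ) = 0 then 3 else (k : ℕ) with hm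
    have hm1 : 1 ≤ m := by
      rw [hm]; split <;> omega
    obtain ⟨hval, hne⟩ := hpm m hm1
    refine ⟨(p:ℚ)^m - 1, 1, ⟨hne, by rw [hval]; exact dvd_zero 3⟩, ⟨one_ne_zero, by simp⟩, ?_, ?_⟩
    · have : (p:ℚ)^m - 1 + 1 = (p:ℚ)^m := by ring
      rw [this]; exact hpowne m
    · have h1 : (p:ℚ)^m - 1 + 1 = (p:ℚ)^m := by ring
      rw [h1, hdiv _ _ (hpowne m), hpow]
      have hk3 : (k : ℕ) < 3 := k.isLt
      rcases Nat.eq_zero_or_pos (k : ℕ) with h | h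
      · simp [hm, h]
      · have : m = (k : ℕ) := by rw [hm, if_neg (by omega)]
        rw [this]; simp
  · -- [1] ⊞ [p] ⊆ {[1],[p]}
    rintro a b ⟨ha, had⟩ ⟨hb, hbd⟩
    rw [padicValRat.div hb hp0, hvp] at hbd
    have hvne : padicValRat p a ≠ padicValRat p b := by omega
    have hab : a + b ≠ 0 := by
      intro h
      have hba : b = -a := by linarith [h]
      rw [hba, padicValRat.neg] at hvne
      exact hvne rfl
    refine ⟨hab, ?_⟩
    have hmin := padicValRat.add_eq_min hab ha hb hvne
    rcases le_or_gt (padicValRat p a) (padicValRat p b) with h | h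
    · left; rw [hmin, min_eq_left h]; exact had
    · right
      rw [padicValRat.div hab hp0, hvp, hmin, min_eq_right h.le]
      omega
  · -- witness: [1] ∈ [1] ⊞ [p]
    have h1 : (1 : ℚ) + p = ((1 + p : ℕ) : ℚ) := by push_cast; ring
    have hnd : ¬ p ∣ (1 + p) := by
      intro h
      rw [Nat.add_comm] at h
      have : p ∣ 1 := (Nat.dvd_add_right (dvd_refl p)).mp h
      exact absurd (Nat.le_of_dvd one_pos this) (by have := hp.two_le; omega)
    refine ⟨1, p, ⟨one_ne_zero, by simp⟩, ⟨hp0, ?_⟩, ?_, ?_⟩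
    · rw [div_self hp0]; simp
    · rw [h1]
      exact Nat.cast_ne_zero.mpr (by have := hp.two_le; omega)
    · rw [h1, hnat _ hnd]
      exact dvd_zero 3
  · -- witness: [p] ∈ [1] ⊞ [p]
    have hsq : padicValRat p ((p:ℚ)^2 + 1) = 0 ∧ ((p:ℚ)^2 + 1) ≠ 0 := by
      have h1 : (p:ℚ)^2 + 1 = ((p^2 + 1 : ℕ) : ℚ) := by push_cast; ring
      have hnd : ¬ p ∣ (p^2 + 1) := by
        intro h
        have hpp : p ∣ p^2 := dvd_pow_self p (by norm_num)
        have : p ∣ 1 := (Nat.dvd_add_right hpp).mp h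
        exact absurd (Nat.le_of_dvd one_pos this) (by have := hp.two_le; omega)
      refine ⟨by rw [h1]; exact hnat _ hnd, ?_⟩
      rw [h1]
      exact Nat.cast_ne_zero.mpr (by positivity)
    obtain ⟨hsv, hsn⟩ := hsq
    have hkey : (p:ℚ)^3 + p = (p:ℚ) * ((p:ℚ)^2 + 1) := by ring
    refine ⟨(p:ℚ)^3, p, ⟨hpowne 3, by rw [hpow]; norm_num⟩, ⟨hp0, ?_⟩, ?_, ?_⟩
    · rw [div_self hp0]; simp
    · rw [hkey]; exact mul_ne_zero hp0 hsn
    · have h2 : (p:ℚ) * ((p:ℚ)^2 + 1) / p = (p:ℚ)^2 + 1 := by field_simp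
      rw [hkey, h2, hsv]
      exact dvd_zero 3
end

section
/- Up to isomorphism there are exactly 5 hyperfields of order 3. Concretely: if H = {0, 1, g} with g² = 1, g ≠ 1 is a hyperfield, then the pair (1 ⊞ 1, 1 ⊞ g) is one of: ({g}, {0}), ({0,g}, {1,g}), (H, H^×), (H^×, H), ({1}, H), and each of these five choices yields a hyperfield; moreover no two of them are isomorphic. -/
/-- A hyperfield. -/
class Hyperfield (H : Type*) extends CommMonoid H, Zero H where
  hadd : H → H → Set H
  neg : H → H
  zero_ne_one : (0 : H) ≠ 1
  mul_zero : ∀ a : H, a * 0 = 0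
  exists_inv : ∀ a : H, a ≠ 0 → ∃ b : H, a * b = 1
  hadd_nonempty : ∀ a b : H, (hadd a b).Nonempty
  hadd_comm : ∀ a b : H, hadd a b = hadd b a
  hadd_assoc : ∀ a b c : H, (⋃ d ∈ hadd b c, hadd a d) = ⋃ d ∈ hadd a b, hadd d c
  zero_hadd : ∀ a : H, hadd 0 a = {a}
  neg_mem : ∀ a : H, (0 : H) ∈ hadd a (neg a)
  neg_unique : ∀ a b : H, (0 : H) ∈ hadd a b → b = neg a
  reversible : ∀ a b c : H, a ∈ hadd b c ↔ neg b ∈ hadd (neg a) c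
  hadd_distrib : ∀ a b c : H, (fun d => a * d) '' hadd b c = hadd (a * b) (a * c)

/-- An isomorphism of hyperfields. -/
def IsHyperfieldIso {H₁ H₂ : Type*} [Hyperfield H₁] [Hyperfield H₂]
    (φ : H₁ → H₂) : Prop :=
  Function.Bijective φ ∧ φ 0 = 0 ∧ φ 1 = 1 ∧
    (∀ a b : H₁, φ (a * b) = φ a * φ b) ∧
    (∀ a b : H₁, φ '' Hyperfield.hadd a b = Hyperfield.hadd (φ a) (φ b))

/-- `H` is a hyperfield of order 3 with elements `0, 1, g`. -/
def IsOrder3Hyperfield (H : Type*) [Hyperfield H] (g : H) : Prop :=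
  (∀ x : H, x = 0 ∨ x = 1 ∨ x = g) ∧ g ≠ 0 ∧ g ≠ 1 ∧ g * g = 1

/-- The five possible hyperaddition tables on `H = {0, 1, g}`, given by the
pair `(1 ⊞ 1, 1 ⊞ g)`; here `H^× = {1, g}` and `H = Set.univ`. -/
def Table3 (H : Type*) [Hyperfield H] (g : H) : Fin 5 → Prop
  | 0 => Hyperfield.hadd (1 : H) 1 = {g} ∧ Hyperfield.hadd (1 : H) g = {0}
  | 1 => Hyperfield.hadd (1 : H) 1 = {0, g} ∧ Hyperfield.hadd (1 : H) g = {1, g}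
  | 2 => Hyperfield.hadd (1 : H) 1 = Set.univ ∧ Hyperfield.hadd (1 : H) g = {1, g}
  | 3 => Hyperfield.hadd (1 : H) 1 = {1, g} ∧ Hyperfield.hadd (1 : H) g = Set.univ
  | 4 => Hyperfield.hadd (1 : H) 1 = {1} ∧ Hyperfield.hadd (1 : H) g = Set.univ

namespace HFaux

/-- generic membership function: A = table of 1⊞1, B = table of 1⊞g -/
def f (A B : ZMod 3 → Bool) (a b x : ZMod 3) : Bool :=
  if a = 0 then x == b else if b = 0 then x == a
  else if a = 1 && b = 1 then A x
  else if a = 2 && b = 2 then A (2 * x)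
  else B x

def mkHF (f : ZMod 3 → ZMod 3 → ZMod 3 → Bool) (n : ZMod 3 → ZMod 3)
    (h1 : ∀ a b, ∃ x, f a b x = true)
    (h2 : ∀ a b x, f a b x = f b a x)
    (h3 : ∀ a b c x, (∃ d, f b c d = true ∧ f a d x = true) ↔
        (∃ d, f a b d = true ∧ f d c x = true))
    (h4 : ∀ a x, f 0 a x = true ↔ x = a)
    (h5 : ∀ a, f a (n a) 0 = true)
    (h6 : ∀ a b, f a b 0 = true → b = n a)
    (h7 : ∀ a b c, f b c a = true ↔ f (n a) c (n b) = true)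
    (h8 : ∀ a b c x, (∃ d, f b c d = true ∧ a * d = x) ↔ f (a*b) (a*c) x = true) :
    Hyperfield (ZMod 3) where
  toCommMonoid := inferInstance
  toZero := inferInstance
  hadd a b := {x | f a b x = true}
  neg := n
  zero_ne_one := by decide
  mul_zero := by decide
  exists_inv := by decide
  hadd_nonempty a b := h1 a b
  hadd_comm a b := Set.ext fun x => by
    simp only [Set.mem_setOf_eq, h2]
  hadd_assoc a b c := by
    ext x
    simp only [Set.mem_iUnion, Set.mem_setOf_eq, exists_prop]
    exact h3 a b c x
  zero_hadd a := Set.ext fun x => by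
    simp only [Set.mem_setOf_eq, h4, Set.mem_singleton_iff]
  neg_mem a := h5 a
  neg_unique := h6
  reversible a b c := h7 a b c
  hadd_distrib a b c := by
    ext x
    simp only [Set.mem_image, Set.mem_setOf_eq]
    exact h8 a b c x

end HFaux
namespace HFaux

def A0 : ZMod 3 → Bool := (· == 2)
def B0 : ZMod 3 → Bool := (· == 0)
def A1 : ZMod 3 → Bool := fun x => x == 0 || x == 2
def B1 : ZMod 3 → Bool := fun x => x == 1 || x == 2
def A2 : ZMod 3 → Bool := fun _ => true
def A3 : ZMod 3 → Bool := fun x => x == 1 || x == 2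
def B3 : ZMod 3 → Bool := fun _ => true
def A4 : ZMod 3 → Bool := (· == 1)

def inst0 : Hyperfield (ZMod 3) :=
  mkHF (f A0 B0) Neg.neg (by decide) (by decide) (by decide) (by decide)
    (by decide) (by decide) (by decide) (by decide)
def inst1 : Hyperfield (ZMod 3) :=
  mkHF (f A1 B1) id (by decide) (by decide) (by decide) (by decide)
    (by decide) (by decide) (by decide) (by decide)
def inst2 : Hyperfield (ZMod 3) :=
  mkHF (f A2 B1) id (by decide) (by decide) (by decide) (by decide)
    (by decide) (by decide) (by decide) (by decide)
def inst3 : Hyperfield (ZMod 3) :=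
  mkHF (f A3 B3) Neg.neg (by decide) (by decide) (by decide) (by decide)
    (by decide) (by decide) (by decide) (by decide)
def inst4 : Hyperfield (ZMod 3) :=
  mkHF (f A4 B3) Neg.neg (by decide) (by decide) (by decide) (by decide)
    (by decide) (by decide) (by decide) (by decide)

end HFaux
namespace HFaux

lemma order3_0 : @IsOrder3Hyperfield (ZMod 3) inst0 2 := ⟨by decide, by decide, by decide, by decide⟩
lemma order3_1 : @IsOrder3Hyperfield (ZMod 3) inst1 2 := ⟨by decide, by decide, by decide, by decide⟩
lemma order3_2 : @IsOrder3Hyperfield (ZMod 3) inst2 2 := ⟨by decide, by decide, by decide, by decide⟩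
lemma order3_3 : @IsOrder3Hyperfield (ZMod 3) inst3 2 := ⟨by decide, by decide, by decide, by decide⟩
lemma order3_4 : @IsOrder3Hyperfield (ZMod 3) inst4 2 := ⟨by decide, by decide, by decide, by decide⟩

lemma tbl0 : @Table3 (ZMod 3) inst0 2 0 :=
  ⟨Set.ext fun x => by show f A0 B0 1 1 x = true ↔ x = 2; revert x; decide,
   Set.ext fun x => by show f A0 B0 1 2 x = true ↔ x = 0; revert x; decide⟩
lemma tbl1 : @Table3 (ZMod 3) inst1 2 1 :=
  ⟨Set.ext fun x => by show f A1 B1 1 1 x = true ↔ x = 0 ∨ x = 2; revert x; decide,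
   Set.ext fun x => by show f A1 B1 1 2 x = true ↔ x = 1 ∨ x = 2; revert x; decide⟩
lemma tbl2 : @Table3 (ZMod 3) inst2 2 2 :=
  ⟨Set.ext fun x => by show f A2 B1 1 1 x = true ↔ True; revert x; decide,
   Set.ext fun x => by show f A2 B1 1 2 x = true ↔ x = 1 ∨ x = 2; revert x; decide⟩
lemma tbl3 : @Table3 (ZMod 3) inst3 2 3 :=
  ⟨Set.ext fun x => by show f A3 B3 1 1 x = true ↔ x = 1 ∨ x = 2; revert x; decide,
   Set.ext fun x => by show f A3 B3 1 2 x = true ↔ True; revert x; decide⟩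
lemma tbl4 : @Table3 (ZMod 3) inst4 2 4 :=
  ⟨Set.ext fun x => by show f A4 B3 1 1 x = true ↔ x = 1; revert x; decide,
   Set.ext fun x => by show f A4 B3 1 2 x = true ↔ True; revert x; decide⟩

lemma existence : ∀ i : Fin 5, ∃ (H : Type) (inst : Hyperfield H) (g : H),
    @IsOrder3Hyperfield H inst g ∧ @Table3 H inst g i := by
  intro i
  fin_cases i
  · exact ⟨ZMod 3, inst0, 2, order3_0, tbl0⟩
  · exact ⟨ZMod 3, inst1, 2, order3_1, tbl1⟩
  · exact ⟨ZMod 3, inst2, 2, order3_2, tbl2⟩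
  · exact ⟨ZMod 3, inst3, 2, order3_3, tbl3⟩
  · exact ⟨ZMod 3, inst4, 2, order3_4, tbl4⟩

end HFaux
namespace HFaux

variable {H : Type} [Hyperfield H]

lemma neg_eq_mul (a : H) : Hyperfield.neg a = a * Hyperfield.neg 1 := by
  refine (Hyperfield.neg_unique a _ ?_).symm
  have h := Hyperfield.hadd_distrib a 1 (Hyperfield.neg 1)
  rw [mul_one] at h
  have h0 : (0:H) ∈ Hyperfield.hadd 1 (Hyperfield.neg 1) := Hyperfield.neg_mem 1
  have hm : a * 0 ∈ (fun d => a * d) '' Hyperfield.hadd 1 (Hyperfield.neg 1) :=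
    ⟨0, h0, rfl⟩
  rw [Hyperfield.mul_zero, h] at hm
  exact hm

lemma hadd_one_comm (a : H) : Hyperfield.hadd a 1 = Hyperfield.hadd 1 a :=
  Hyperfield.hadd_comm a 1

lemma neg_one_ne_zero : Hyperfield.neg (1 : H) ≠ 0 := by
  intro h
  have h0 : (0:H) ∈ Hyperfield.hadd 1 (Hyperfield.neg 1) := Hyperfield.neg_mem 1
  rw [h, Hyperfield.hadd_comm, Hyperfield.zero_hadd] at h0
  exact Hyperfield.zero_ne_one h0

/-- g-invariance of 1⊞g -/
lemma g_inv {g : H} (hgg : g * g = 1) {x : H} (hx : x ∈ Hyperfield.hadd 1 g) :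
    g * x ∈ Hyperfield.hadd 1 g := by
  have h := Hyperfield.hadd_distrib g 1 g
  rw [mul_one, hgg, hadd_one_comm] at h
  rw [← h]
  exact ⟨x, hx, rfl⟩

lemma classify (g : H) (h : IsOrder3Hyperfield H g) : ∃ i : Fin 5, Table3 H g i := by
  obtain ⟨hall, hg0, hg1, hgg⟩ := h
  have h01 : (0:H) ≠ 1 := Hyperfield.zero_ne_one
  -- neg 1 is 1 or g
  have hn1 : Hyperfield.neg (1:H) = 1 ∨ Hyperfield.neg (1:H) = g := by
    rcases hall (Hyperfield.neg 1) with h | h | h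
    · exact absurd h neg_one_ne_zero
    · exact Or.inl h
    · exact Or.inr h
  rcases hn1 with hn | hn
  · -- Case B : neg 1 = 1, tables 1 or 2
    have hng : Hyperfield.neg g = g := by rw [neg_eq_mul, hn, mul_one]
    have h0in : (0:H) ∈ Hyperfield.hadd 1 1 := by
      have := Hyperfield.neg_mem (1:H); rwa [hn] at this
    have h0out : (0:H) ∉ Hyperfield.hadd 1 g := by
      intro hc
      have := Hyperfield.neg_unique 1 g hc
      rw [hn] at this; exact hg1 this
    -- 1 ⊞ g = {1, g}
    have hB : Hyperfield.hadd (1:H) g = {1, g} := by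
      have hboth : (1:H) ∈ Hyperfield.hadd 1 g ∧ g ∈ Hyperfield.hadd 1 g := by
        obtain ⟨x, hx⟩ := Hyperfield.hadd_nonempty (1:H) g
        rcases hall x with rfl | rfl | rfl
        · exact absurd hx h0out
        · have h2 := g_inv hgg hx
          rw [mul_one] at h2
          exact ⟨hx, h2⟩
        · have h2 := g_inv hgg hx
          rw [hgg] at h2
          exact ⟨h2, hx⟩
      ext x
      simp only [Set.mem_insert_iff, Set.mem_singleton_iff]
      constructor
      · intro hx
        rcases hall x with rfl | rfl | rfl
        · exact absurd hx h0out
        · exact Or.inl rfl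
        · exact Or.inr rfl
      · rintro (rfl | rfl)
        · exact hboth.1
        · exact hboth.2
    have hgin : g ∈ Hyperfield.hadd (1:H) 1 := by
      rw [Hyperfield.reversible, hn, hng, hadd_one_comm, hB]
      exact Or.inl rfl
    by_cases h1in : (1:H) ∈ Hyperfield.hadd 1 1
    · refine ⟨2, ?_, hB⟩
      ext x
      simp only [Set.mem_univ, iff_true]
      rcases hall x with rfl | rfl | rfl
      · exact h0in
      · exact h1in
      · exact hgin
    · refine ⟨1, ?_, hB⟩
      ext x
      simp only [Set.mem_insert_iff, Set.mem_singleton_iff]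
      constructor
      · intro hx
        rcases hall x with rfl | rfl | rfl
        · exact Or.inl rfl
        · exact absurd hx h1in
        · exact Or.inr rfl
      · rintro (rfl | rfl)
        · exact h0in
        · exact hgin
  · -- Case A : neg 1 = g, tables 0, 3 or 4
    have hng : Hyperfield.neg g = 1 := by rw [neg_eq_mul, hn, hgg]
    have h0in : (0:H) ∈ Hyperfield.hadd 1 g := by
      have := Hyperfield.neg_mem (1:H); rwa [hn] at this
    have h0out : (0:H) ∉ Hyperfield.hadd 1 1 := by
      intro hc
      have := Hyperfield.neg_unique 1 1 hc
      rw [hn] at this; exact hg1 this.symm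
    by_cases h1B : (1:H) ∈ Hyperfield.hadd 1 g
    · -- 1 ⊞ g = univ
      have hgB : g ∈ Hyperfield.hadd (1:H) g := by
        have := g_inv hgg h1B; rwa [mul_one] at this
      have hB : Hyperfield.hadd (1:H) g = Set.univ := by
        ext x
        simp only [Set.mem_univ, iff_true]
        rcases hall x with rfl | rfl | rfl
        · exact h0in
        · exact h1B
        · exact hgB
      -- 1 ∈ 1 ⊞ 1
      have h1A : (1:H) ∈ Hyperfield.hadd 1 1 := by
        have hrev := (Hyperfield.reversible (1:H) 1 g).mp h1B
        rw [hn] at hrev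
        -- hrev : g ∈ hadd g g
        have hdist := Hyperfield.hadd_distrib g 1 1
        rw [mul_one] at hdist
        rw [← hdist] at hrev
        obtain ⟨y, hy, hgy⟩ := hrev
        have : y = 1 := by
          have h2 := congrArg (g * ·) hgy
          simpa [← mul_assoc, hgg] using h2
        rwa [this] at hy
      by_cases hgA : g ∈ Hyperfield.hadd (1:H) 1
      · refine ⟨3, ?_, hB⟩
        ext x
        simp only [Set.mem_insert_iff, Set.mem_singleton_iff]
        constructor
        · intro hx
          rcases hall x with rfl | rfl | rfl
          · exact absurd hx h0out
          · exact Or.inl rfl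
          · exact Or.inr rfl
        · rintro (rfl | rfl)
          · exact h1A
          · exact hgA
      · refine ⟨4, ?_, hB⟩
        ext x
        simp only [Set.mem_singleton_iff]
        constructor
        · intro hx
          rcases hall x with rfl | rfl | rfl
          · exact absurd hx h0out
          · rfl
          · exact absurd hx hgA
        · rintro rfl
          exact h1A
    · -- 1 ∉ 1 ⊞ g : table 0
      have hgout : g ∉ Hyperfield.hadd (1:H) g := by
        intro hc
        have := g_inv hgg hc
        rw [hgg] at this
        exact h1B this
      have hB : Hyperfield.hadd (1:H) g = {0} := by
        ext x
        simp only [Set.mem_singleton_iff]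
        constructor
        · intro hx
          rcases hall x with rfl | rfl | rfl
          · rfl
          · exact absurd hx h1B
          · exact absurd hx hgout
        · rintro rfl; exact h0in
      have h1out : (1:H) ∉ Hyperfield.hadd 1 1 := by
        intro hc
        have hrev := (Hyperfield.reversible (1:H) 1 1).mp hc
        rw [hn, hadd_one_comm, hB] at hrev
        exact hg0 hrev
      refine ⟨0, ?_, hB⟩
      ext x
      simp only [Set.mem_singleton_iff]
      constructor
      · intro hx
        rcases hall x with rfl | rfl | rfl
        · exact absurd hx h0out
        · exact absurd hx h1out
        · rfl
      · rintro rfl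
        obtain ⟨x, hx⟩ := Hyperfield.hadd_nonempty (1:H) 1
        rcases hall x with rfl | rfl | rfl
        · exact absurd hx h0out
        · exact absurd hx h1out
        · exact hx

end HFaux
namespace HFaux

lemma table_unique {H : Type} [Hyperfield H] {g : H} (h : IsOrder3Hyperfield H g) :
    ∀ i j : Fin 5, Table3 H g i → Table3 H g j → i = j := by
  obtain ⟨hall, hg0, hg1, hgg⟩ := h
  have h01 : (0:H) ≠ 1 := Hyperfield.zero_ne_one
  have h0g : (0:H) ≠ g := Ne.symm hg0
  have h1g : (1:H) ≠ g := Ne.symm hg1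
  have h10 : (1:H) ≠ 0 := Ne.symm h01
  intro i j hi hj
  fin_cases i <;> fin_cases j <;>
    first
      | rfl
      | (exfalso
         simp only [Table3] at hi hj
         have key := Set.ext_iff.mp (hi.1.symm.trans hj.1)
         have k0 := key 0
         have k1 := key 1
         have kg := key g
         simp [Set.mem_insert_iff, Set.mem_singleton_iff, Set.mem_univ,
           h01, h0g, h1g, h10, hg0, hg1] at k0 k1 kg)

lemma table_transfer {H₁ H₂ : Type} [Hyperfield H₁] [Hyperfield H₂] {g₁ : H₁} {g₂ : H₂}
    (h1 : IsOrder3Hyperfield H₁ g₁) (h2 : IsOrder3Hyperfield H₂ g₂)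
    (φ : H₁ → H₂) (hφ : IsHyperfieldIso φ) {i : Fin 5} (hi : Table3 H₁ g₁ i) :
    Table3 H₂ g₂ i := by
  obtain ⟨⟨hinj, hsurj⟩, hφ0, hφ1, hmul, himg⟩ := hφ
  have hφg : φ g₁ = g₂ := by
    rcases h2.1 (φ g₁) with h | h | h
    · exact absurd (hinj (h.trans hφ0.symm)) h1.2.1
    · exact absurd (hinj (h.trans hφ1.symm)) h1.2.2.1
    · exact h
  have hA : Hyperfield.hadd (1:H₂) 1 = φ '' Hyperfield.hadd (1:H₁) 1 := by
    rw [himg, hφ1]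
  have hB : Hyperfield.hadd (1:H₂) g₂ = φ '' Hyperfield.hadd (1:H₁) g₁ := by
    rw [himg, hφ1, hφg]
  fin_cases i <;>
    simp only [Table3] at hi ⊢ <;>
    rw [hA, hB, hi.1, hi.2] <;>
    simp [Set.image_insert_eq, Set.image_singleton, Set.image_univ,
      hsurj.range_eq, hφ0, hφ1, hφg]

end HFaux

/-- Up to isomorphism there are exactly 5 hyperfields of order 3: every
hyperfield `{0, 1, g}` realizes one of the five tables, every table is
realized, and hyperfields realizing different tables are not isomorphic. -/
theorem stmt_17 :
    (∀ (H : Type) [Hyperfield H] (g : H), IsOrder3Hyperfield H g →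
      ∃ i : Fin 5, Table3 H g i) ∧
    (∀ i : Fin 5, ∃ (H : Type) (inst : Hyperfield H) (g : H),
      @IsOrder3Hyperfield H inst g ∧ @Table3 H inst g i) ∧
    (∀ (H₁ H₂ : Type) [Hyperfield H₁] [Hyperfield H₂] (g₁ : H₁) (g₂ : H₂)
      (i j : Fin 5), IsOrder3Hyperfield H₁ g₁ → IsOrder3Hyperfield H₂ g₂ →
      Table3 H₁ g₁ i → Table3 H₂ g₂ j → i ≠ j →
      ¬∃ φ : H₁ → H₂, IsHyperfieldIso φ) := by
  refine ⟨fun H _ g h => HFaux.classify g h, HFaux.existence, ?_⟩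
  rintro H₁ H₂ _ _ g₁ g₂ i j h1 h2 hi hj hij ⟨φ, hφ⟩
  exact hij (HFaux.table_unique h2 i j (HFaux.table_transfer h1 h2 φ hφ hi) hj)
end

section
/- Let H be a hyperfield of order 4, so H = {0, 1, g, g²} with g³ = 1. If 1 ⊞ 1 = {0, g, g²} and 1 ⊞ g = {1, g} (or the conjugate structure with 1 ⊞ 1 = {0,1,g}, 1 ⊞ g = {1,g²}), then H is not isomorphic to a quotient F/G of any field F by a subgroup G of F^×. -/
universe u v

/-- A presentation of the hyperfield `H` as a quotient hyperfield `F/G`: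
a field `F`, a subgroup `G ≤ F^×`, and the quotient map `φ : F → H`, which is
surjective, identifies exactly the elements in a common coset of `G`
(and sends only `0` to `0`), preserves `1` and multiplication, and such that
`φ(a) ⊞ φ(b) = {[a' + b'] : a' ∈ aG, b' ∈ bG}`. -/
structure HyperfieldQuotientPresentation (H : Type v) [Hyperfield H] :
    Type (max (u + 1) v) where
  F : Type u
  [fieldF : Field F]
  G : Subgroup Fˣ
  φ : F → H
  surj : Function.Surjective φ
  zero_iff : ∀ x : F, φ x = 0 ↔ x = 0
  map_one : φ 1 = 1
  map_mul : ∀ x y : F, φ (x * y) = φ x * φ y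
  coset_iff : ∀ x y : Fˣ, φ x = φ y ↔ x⁻¹ * y ∈ G
  hadd_eq : ∀ a b : F, Hyperfield.hadd (φ a) (φ b) =
    {h : H | ∃ a' b' : F, φ a' = φ a ∧ φ b' = φ b ∧ φ (a' + b') = h}

/-- `H` is isomorphic to a quotient hyperfield `F/G` for some field `F` and
subgroup `G ≤ F^×`. -/
def IsQuotientHyperfield (H : Type v) [Hyperfield H] : Prop :=
  Nonempty (HyperfieldQuotientPresentation.{u, v} H)

/-- A hyperfield of order 4, `H = {0, 1, g, g²}` with `g³ = 1`, whose
hyperaddition satisfies `1 ⊞ 1 = {0, g, g²}` and `1 ⊞ g = {1, g}` (or the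
conjugate table `1 ⊞ 1 = {0, 1, g}`, `1 ⊞ g = {1, g²}`), is not a quotient of
any field. -/
theorem stmt_18 (H : Type v) [Hyperfield H] (g : H)
    (helts : ∀ x : H, x = 0 ∨ x = 1 ∨ x = g ∨ x = g ^ 2)
    (hg0 : g ≠ 0) (hg1 : g ≠ 1) (hg3 : g ^ 3 = 1)
    (htable :
      (Hyperfield.hadd (1 : H) 1 = {0, g, g ^ 2} ∧
        Hyperfield.hadd (1 : H) g = {1, g}) ∨
      (Hyperfield.hadd (1 : H) 1 = {0, 1, g} ∧
        Hyperfield.hadd (1 : H) g = {1, g ^ 2})) :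
    ¬IsQuotientHyperfield.{u, v} H := by
  rintro ⟨P⟩
  letI : Field P.F := P.fieldF
  -- basic facts about H
  have h01 : (0:H) ≠ 1 := Hyperfield.zero_ne_one
  have h10 : (1:H) ≠ 0 := h01.symm
  have hGG : g * g = g ^ 2 := (pow_two g).symm
  have hG2g : g ^ 2 * g = 1 := by
    have h := pow_succ g 2
    rw [show (2+1) = 3 from rfl] at h
    rw [← h, hg3]
  have hGg2 : g * g ^ 2 = 1 := by rw [mul_comm]; exact hG2g
  have hG4 : g ^ 2 * g ^ 2 = g := by
    have h : g ^ 2 * g ^ 2 = g ^ 2 * g * g := by rw [mul_assoc, hGG]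
    rw [h, hG2g, one_mul]
  have hK0 : g ^ 2 ≠ 0 := fun e => hg0 (by rw [← hG4, e]; exact Hyperfield.mul_zero 0)
  have hK1 : g ^ 2 ≠ 1 := fun e => hg1 (by rw [← hG4, e, one_mul])
  have hKg : g ^ 2 ≠ g := fun e => hg1 (by rw [← hGg2, e, ← pow_two, e])
  -- membership eliminators
  have pair_elim : ∀ {a b c : H}, a ∈ ({b, c} : Set H) → a = b ∨ a = c := by
    intro a b c h; simpa using h
  have triple_elim : ∀ {a b c d : H}, a ∈ ({b, c, d} : Set H) → a = b ∨ a = c ∨ a = d := by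
    intro a b c d h; simpa using h
  -- basic facts about φ
  have hphi0 : P.φ 0 = 0 := (P.zero_iff 0).mpr rfl
  have hmem : ∀ a b : P.F, P.φ (a+b) ∈ Hyperfield.hadd (P.φ a) (P.φ b) := by
    intro a b
    rw [P.hadd_eq]
    exact ⟨a, b, rfl, rfl, rfl⟩
  have hwit : ∀ (h : H), h ∈ Hyperfield.hadd (1:H) 1 →
      ∃ x : P.F, P.φ x = 1 ∧ P.φ (1+x) = h := by
    intro h hh
    rw [← P.map_one, P.hadd_eq] at hh
    obtain ⟨a, b, ha, hb, hab⟩ := hh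
    rw [P.map_one] at ha hb
    have ha0 : a ≠ 0 := fun e => h10 (by rw [← ha, e, hphi0])
    have hai : P.φ a⁻¹ = 1 := by
      have h1 : P.φ a * P.φ a⁻¹ = 1 := by
        rw [← P.map_mul, mul_inv_cancel₀ ha0, P.map_one]
      rwa [ha, one_mul] at h1
    refine ⟨a⁻¹ * b, ?_, ?_⟩
    · rw [P.map_mul, hai, one_mul, hb]
    · have e : (1 : P.F) + a⁻¹ * b = a⁻¹ * (a + b) := by field_simp
      rw [e, P.map_mul, hai, one_mul, hab]
  have hT0 : (0:H) ∈ Hyperfield.hadd (1:H) 1 := by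
    rcases htable with ⟨t11, _⟩ | ⟨t11, _⟩ <;> rw [t11] <;> simp
  have hneg1 : P.φ (-1) = 1 := by
    obtain ⟨x, hx, hx0⟩ := hwit 0 hT0
    have h1 : (1:P.F) + x = 0 := (P.zero_iff _).mp hx0
    have hx1 : x = -1 := by linear_combination h1
    rw [← hx1]; exact hx
  have hNeg : ∀ a : P.F, P.φ (-a) = P.φ a := by
    intro a
    rw [show (-a : P.F) = -1 * a by ring, P.map_mul, hneg1, one_mul]
  rcases htable with ⟨t11, t1g⟩ | ⟨t11, t1g⟩
  · -- CASE 1 : 1⊞1 = {0,g,g²}, 1⊞g = {1,g}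
    have t1g2 : Hyperfield.hadd (1:H) (g ^ 2) = {1, g ^ 2} := by
      have e1 := Hyperfield.hadd_distrib (g ^ 2) 1 g
      rw [t1g] at e1
      simp only [Set.image_insert_eq, Set.image_singleton, mul_one] at e1
      rw [hG2g] at e1
      rw [Hyperfield.hadd_comm, ← e1]
      exact Set.pair_comm _ _
    have tgg2 : Hyperfield.hadd g (g ^ 2) = {g, g ^ 2} := by
      have e1 := Hyperfield.hadd_distrib g 1 g
      rw [t1g] at e1
      simp only [Set.image_insert_eq, Set.image_singleton, mul_one] at e1
      rw [hGG] at e1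
      exact e1.symm
    by_cases h2 : (2 : P.F) = 0
    · -- characteristic 2
      obtain ⟨t, ht⟩ := P.surj g
      have c1m : P.φ (1 + t) ∈ ({1, g} : Set H) := by
        have m := hmem 1 t
        rwa [P.map_one, ht, t1g] at m
      have htt : P.φ (t * t) = g ^ 2 := by rw [P.map_mul, ht, hGG]
      have httt : P.φ (t * t * t) = 1 := by rw [P.map_mul, htt, ht, hG2g]
      rcases pair_elim c1m with c1 | c1
      · -- φ(1+t) = 1
        have hs1 : P.φ (1+t+t*t) ∈ ({1, g ^ 2} : Set H) := by
          have m := hmem (1+t) (t*t)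
          rwa [c1, htt, t1g2, show ((1:P.F)+t)+(t*t) = 1+t+t*t by ring] at m
        have harg : P.φ (t + t*t) = g := by
          rw [show (t+t*t : P.F) = t*(1+t) by ring, P.map_mul, ht, c1, mul_one]
        have hs2 : P.φ (1+t+t*t) ∈ ({1, g} : Set H) := by
          have m := hmem 1 (t + t*t)
          rwa [P.map_one, harg, t1g, show (1:P.F)+(t+t*t) = 1+t+t*t by ring] at m
        have hphis : P.φ (1+t+t*t) = 1 := by
          rcases pair_elim hs1 with f | f
          · exact f
          · exfalso
            rcases pair_elim hs2 with f' | f' <;> rw [f] at f'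
            exacts [hK1 f', hKg f']
        have key : P.φ (1 + t*t*t) = 1 := by
          rw [show (1:P.F) + t*t*t = (1+t)*(1+t+t*t) by linear_combination (-t - t*t) * h2,
              P.map_mul, c1, one_mul, hphis]
        have m := hmem 1 (t*t*t)
        rw [P.map_one, httt, t11, key] at m
        rcases triple_elim m with f | f | f
        exacts [h01 f.symm, hg1 f.symm, hK1 f.symm]
      · -- φ(1+t) = g
        have hs1 : P.φ (1+t+t*t) ∈ ({g, g ^ 2} : Set H) := by
          have m := hmem (1+t) (t*t)
          rwa [c1, htt, tgg2, show ((1:P.F)+t)+(t*t) = 1+t+t*t by ring] at m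
        have harg : P.φ (t + t*t) = g ^ 2 := by
          rw [show (t+t*t : P.F) = t*(1+t) by ring, P.map_mul, ht, c1, hGG]
        have hs2 : P.φ (1+t+t*t) ∈ ({1, g ^ 2} : Set H) := by
          have m := hmem 1 (t + t*t)
          rwa [P.map_one, harg, t1g2, show (1:P.F)+(t+t*t) = 1+t+t*t by ring] at m
        have hphis : P.φ (1+t+t*t) = g ^ 2 := by
          rcases pair_elim hs1 with f | f
          · exfalso
            rcases pair_elim hs2 with f' | f' <;> rw [f] at f'
            exacts [hg1 f', hKg f'.symm]
          · exact f
        have key : P.φ (1 + t*t*t) = 1 := by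
          rw [show (1:P.F) + t*t*t = (1+t)*(1+t+t*t) by linear_combination (-t - t*t) * h2,
              P.map_mul, c1, hphis, hGg2]
        have m := hmem 1 (t*t*t)
        rw [P.map_one, httt, t11, key] at m
        rcases triple_elim m with f | f | f
        exacts [h01 f.symm, hg1 f.symm, hK1 f.symm]
    · -- 2 ≠ 0 in F
      have m2 := hmem 1 1
      rw [P.map_one, t11, one_add_one_eq_two] at m2
      have h2ne : P.φ 2 ≠ 0 := fun e => h2 ((P.zero_iff 2).mp e)
      have m2' : P.φ 2 = g ∨ P.φ 2 = g ^ 2 := by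
        rcases triple_elim m2 with e | e | e
        · exact absurd e h2ne
        · exact Or.inl e
        · exact Or.inr e
      rcases m2' with e2 | e2
      · -- φ2 = g
        have m3 : P.φ 3 ∈ ({1, g} : Set H) := by
          have m := hmem 1 2
          rwa [P.map_one, e2, t1g, show (1:P.F)+2 = 3 by norm_num] at m
        have hphi4 : P.φ 4 = g ^ 2 := by
          rw [show (4:P.F) = 2*2 by norm_num, P.map_mul, e2, hGG]
        have hphi3 : P.φ 3 = 1 := by
          rcases pair_elim m3 with e | e
          · exact e
          · exfalso
            have m := hmem 1 3
            rw [P.map_one, e, t1g, show (1:P.F)+3 = 4 by norm_num, hphi4] at m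
            rcases pair_elim m with f | f
            exacts [hK1 f, hKg f]
        have hphi8 : P.φ 8 = 1 := by
          rw [show (8:P.F) = 2*2*2 by norm_num, P.map_mul, P.map_mul, e2, hGG, hG2g]
        have hphi9 : P.φ 9 = 1 := by
          rw [show (9:P.F) = 3*3 by norm_num, P.map_mul, hphi3, one_mul]
        have m9 := hmem 1 8
        rw [P.map_one, hphi8, t11, show (1:P.F)+8 = 9 by norm_num, hphi9] at m9
        rcases triple_elim m9 with f | f | f
        exacts [h01 f.symm, hg1 f.symm, hK1 f.symm]
      · -- φ2 = g²
        have m3 : P.φ 3 ∈ ({1, g ^ 2} : Set H) := by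
          have m := hmem 1 2
          rwa [P.map_one, e2, t1g2, show (1:P.F)+2 = 3 by norm_num] at m
        have hphi4 : P.φ 4 = g := by
          rw [show (4:P.F) = 2*2 by norm_num, P.map_mul, e2, hG4]
        have hphi3 : P.φ 3 = 1 := by
          rcases pair_elim m3 with e | e
          · exact e
          · exfalso
            have m := hmem 1 3
            rw [P.map_one, e, t1g2, show (1:P.F)+3 = 4 by norm_num, hphi4] at m
            rcases pair_elim m with f | f
            exacts [hg1 f, hKg f.symm]
        have hphi8 : P.φ 8 = 1 := by
          rw [show (8:P.F) = 2*2*2 by norm_num, P.map_mul, P.map_mul, e2, hG4, hGg2]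
        have hphi9 : P.φ 9 = 1 := by
          rw [show (9:P.F) = 3*3 by norm_num, P.map_mul, hphi3, one_mul]
        have m9 := hmem 1 8
        rw [P.map_one, hphi8, t11, show (1:P.F)+8 = 9 by norm_num, hphi9] at m9
        rcases triple_elim m9 with f | f | f
        exacts [h01 f.symm, hg1 f.symm, hK1 f.symm]
  · -- CASE 2 : 1⊞1 = {0,1,g}, 1⊞g = {1,g²}
    have t1g2 : Hyperfield.hadd (1:H) (g ^ 2) = {g, g ^ 2} := by
      have e1 := Hyperfield.hadd_distrib (g ^ 2) 1 g
      rw [t1g] at e1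
      simp only [Set.image_insert_eq, Set.image_singleton, mul_one] at e1
      rw [hG2g, hG4] at e1
      rw [Hyperfield.hadd_comm, ← e1]
      exact Set.pair_comm _ _
    obtain ⟨x, hx, hx1⟩ := hwit g (by rw [t11]; simp)
    have hmx : P.φ (-x) = 1 := by rw [hNeg, hx]
    have mdx := hmem 1 (-x)
    rw [P.map_one, hmx, t11, show (1:P.F) + -x = 1 - x by ring] at mdx
    rcases triple_elim mdx with e | e | e
    · -- 1 - x = 0, i.e. x = 1
      have hx1' : x = 1 := by
        have h1 : (1:P.F) - x = 0 := (P.zero_iff _).mp e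
        linear_combination -h1
      subst hx1'
      have hphi2 : P.φ 2 = g := by rwa [one_add_one_eq_two] at hx1
      have hphi4 : P.φ 4 = g ^ 2 := by
        rw [show (4:P.F) = 2*2 by norm_num, P.map_mul, hphi2, hGG]
      have m3 : P.φ 3 ∈ ({1, g ^ 2} : Set H) := by
        have m := hmem 1 2
        rwa [P.map_one, hphi2, t1g, show (1:P.F)+2 = 3 by norm_num] at m
      have hphi3 : P.φ 3 = g ^ 2 := by
        rcases pair_elim m3 with e3 | e3
        · exfalso
          have m := hmem 1 3
          rw [P.map_one, e3, t11, show (1:P.F)+3 = 4 by norm_num, hphi4] at m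
          rcases triple_elim m with f | f | f
          exacts [hK0 f, hK1 f, hKg f]
        · exact e3
      obtain ⟨y, hy, hy1⟩ := hwit 1 (by rw [t11]; simp)
      have m2y1 : P.φ (2 + y) ∈ ({0, 1, g} : Set H) := by
        have m := hmem 1 (1 + y)
        rwa [P.map_one, hy1, t11, show (1:P.F)+(1+y) = 2+y by ring] at m
      have m2y2 : P.φ (2 + y) ∈ ({1, g ^ 2} : Set H) := by
        have m := hmem y 2
        rwa [hy, hphi2, t1g, show (y+2 : P.F) = 2+y by ring] at m
      have h2y : P.φ (2 + y) = 1 := by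
        rcases pair_elim m2y2 with f | f
        · exact f
        · exfalso
          rcases triple_elim m2y1 with e' | e' | e' <;> rw [f] at e'
          exacts [hK0 e', hK1 e', hKg e']
      have m3y1 : P.φ (3 + y) ∈ ({0, 1, g} : Set H) := by
        have m := hmem 1 (2 + y)
        rwa [P.map_one, h2y, t11, show (1:P.F)+(2+y) = 3+y by ring] at m
      have m3y2 : P.φ (3 + y) ∈ ({1, g ^ 2} : Set H) := by
        have m := hmem 2 (1 + y)
        rw [hphi2, hy1, Hyperfield.hadd_comm, t1g] at m
        rwa [show (2:P.F)+(1+y) = 3+y by ring] at m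
      have m3y3 : P.φ (3 + y) ∈ ({g, g ^ 2} : Set H) := by
        have m := hmem 3 y
        rw [hphi3, hy, Hyperfield.hadd_comm, t1g2] at m
        exact m
      rcases pair_elim m3y3 with f | f
      · rcases pair_elim m3y2 with f' | f' <;> rw [f] at f'
        exacts [hg1 f', hKg f'.symm]
      · rcases triple_elim m3y1 with f' | f' | f' <;> rw [f] at f'
        exacts [hK0 f', hK1 f', hKg f']
    · -- φ(1-x) = 1
      have hphi2a : P.φ 2 ∈ ({1, g ^ 2} : Set H) := by
        have m := hmem (1+x) (1-x)
        rw [hx1, e, Hyperfield.hadd_comm, t1g] at m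
        rwa [show ((1:P.F)+x)+(1-x) = 2 by ring] at m
      have hphi2b : P.φ 2 ∈ ({0, 1, g} : Set H) := by
        have m := hmem 1 1
        rwa [P.map_one, t11, one_add_one_eq_two] at m
      have hphi2 : P.φ 2 = 1 := by
        rcases pair_elim hphi2a with f | f
        · exact f
        · exfalso
          rcases triple_elim hphi2b with f' | f' | f' <;> rw [f] at f'
          exacts [hK0 f', hK1 f', hKg f']
      have m2xa : P.φ (2 + x) ∈ ({1, g ^ 2} : Set H) := by
        have m := hmem 1 (1 + x)
        rwa [P.map_one, hx1, t1g, show (1:P.F)+(1+x) = 2+x by ring] at m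
      have m2xb : P.φ (2 + x) ∈ ({0, 1, g} : Set H) := by
        have m := hmem 2 x
        rwa [hphi2, hx, t11] at m
      have h2x : P.φ (2 + x) = 1 := by
        rcases pair_elim m2xa with f | f
        · exact f
        · exfalso
          rcases triple_elim m2xb with f' | f' | f' <;> rw [f] at f'
          exacts [hK0 f', hK1 f', hKg f']
      have hsq : P.φ (-((1+x)*(1+x))) = g ^ 2 := by
        rw [hNeg, P.map_mul, hx1, hGG]
      have mfin := hmem 1 (-((1+x)*(1+x)))
      rw [P.map_one, hsq, t1g2,
          show (1:P.F) + -((1+x)*(1+x)) = (-x) * (2+x) by ring,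
          P.map_mul, hmx, h2x, one_mul] at mfin
      rcases pair_elim mfin with f | f
      exacts [hg1 f.symm, hK1 f.symm]
    · -- φ(1-x) = g
      have hxx : P.φ (-(x*x)) = 1 := by rw [hNeg, P.map_mul, hx, one_mul]
      have m := hmem 1 (-(x*x))
      rw [P.map_one, hxx, t11,
          show (1:P.F) + -(x*x) = (1+x)*(1-x) by ring,
          P.map_mul, hx1, e, hGG] at m
      rcases triple_elim m with f | f | f
      exacts [hK0 f, hK1 f, hKg f]
end
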